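/- arXiv:math/0511118 — 12 statements merged into one kernel-verified Lean document; each statement's English description precedes it below -/
import Mathlib

section
/- Let A, B ∈ ℝ and let F : ℝ → ℝ be twice differentiable with F''(z) = h(z) for all z and F(−1) = F(1) = 0. Then the boundary conditions F'(1) = −2·p_c(1) and F'(−1) = 2·p_c(−1) hold if and only if A·α₁ + B·α₀ = −2β₀ and A·α₂ + B·α₁ = −2β₁. In particular, there is exactly one pair (A,B) ∈ ℝ² for which the solution F of F'' = h, F(±1) = 0 also satisfies F'(±1) = ∓2·p_c(±1). -/
/-!
Integrating `F'' = h` against `1` and `t` over `[-1, 1]` and using `F(±1) = 0` expresses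
`F'(1) - F'(-1)` and `F'(1) + F'(-1)` through the moments of `h`, and these are affine in `(A, B)`
with coefficients `α₀, α₁, α₂`; this gives the equivalence. The resulting `2 × 2` system has
determinant `α₁² - α₀α₂`, which is negative by the strict Cauchy–Schwarz inequality for the
weight `p_c`, positive on `(-1, 1)` because `|x_a| ≤ 1`. Since every `h` has a solution
`F` with `F(±1) = 0`, the boundary conditions pin down `(A, B)` uniquely.
-/

open MeasureTheory Set intervalIntegral

lemma intervalIntegral_pos_of_pos_on_of_ne {f : ℝ → ℝ} {a b : ℝ} (c : ℝ)
    (hfi : IntervalIntegrable f volume a b) (hpos : ∀ t ∈ Ioo a b, t ≠ c → 0 < f t)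
    (hab : a < b) : 0 < ∫ t in a..b, f t := by
  by_cases hc : c ∈ Ioo a b
  · have hc' : c ∈ uIcc a b := mem_uIcc_of_le hc.1.le hc.2.le
    have hac : IntervalIntegrable f volume a c := hfi.mono_set (uIcc_subset_uIcc_left hc')
    have hcb : IntervalIntegrable f volume c b := hfi.mono_set (uIcc_subset_uIcc_right hc')
    rw [← integral_add_adjacent_intervals hac hcb]
    exact add_pos
      (intervalIntegral_pos_of_pos_on hac (fun t ht => hpos t ⟨ht.1, ht.2.trans hc.2⟩ ht.2.ne) hc.1)
      (intervalIntegral_pos_of_pos_on hcb (fun t ht => hpos t ⟨hc.1.trans ht.1, ht.2⟩ ht.1.ne')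
        hc.2)
  · exact intervalIntegral_pos_of_pos_on hfi (fun t ht => hpos t ht fun h => hc (h ▸ ht)) hab

/-- Strict Cauchy–Schwarz: `l ↦ ∫ (l t + 1)² w t` is a positive quadratic, so its discriminant is
negative. -/
lemma sq_integral_mul_id_lt {w : ℝ → ℝ} {a b : ℝ} (hab : a < b)
    (hw : IntervalIntegrable w volume a b) (hpos : ∀ t ∈ Ioo a b, 0 < w t) :
    (∫ t in a..b, w t * t) ^ 2 < (∫ t in a..b, w t) * ∫ t in a..b, w t * t ^ 2 := by
  have hw1 : IntervalIntegrable (fun t => w t * t) volume a b :=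
    hw.mul_continuousOn continuousOn_id
  have hw2 : IntervalIntegrable (fun t => w t * t ^ 2) volume a b :=
    hw.mul_continuousOn (continuous_pow 2).continuousOn
  have hm2 : 0 < ∫ t in a..b, w t * t ^ 2 :=
    intervalIntegral_pos_of_pos_on_of_ne 0 hw2
      (fun t ht ht0 => mul_pos (hpos t ht) (pow_two_pos_of_ne_zero ht0)) hab
  have hq : ∀ l : ℝ, 0 < (∫ t in a..b, w t * t ^ 2) * (l * l) +
      2 * (∫ t in a..b, w t * t) * l + ∫ t in a..b, w t := by
    intro l
    have hquad : (∫ t in a..b, w t * t ^ 2) * (l * l) + 2 * (∫ t in a..b, w t * t) * l +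
        ∫ t in a..b, w t = ∫ t in a..b, (l * t + 1) ^ 2 * w t := by
      have : (fun t => (l * t + 1) ^ 2 * w t) =
          fun t => (l * l) * (w t * t ^ 2) + (2 * l) * (w t * t) + w t := by
        ext t; ring
      rw [this, integral_add ((hw2.const_mul _).add (hw1.const_mul _)) hw,
        integral_add (hw2.const_mul _) (hw1.const_mul _), intervalIntegral.integral_const_mul,
        intervalIntegral.integral_const_mul]
      ring
    rw [hquad]
    refine intervalIntegral_pos_of_pos_on_of_ne (-1 / l)
      (hw.continuousOn_mul (by fun_prop)) (fun t ht htl => mul_pos ?_ (hpos t ht)) hab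
    refine pow_two_pos_of_ne_zero fun h => htl ?_
    have hl : l ≠ 0 := by rintro rfl; simp at h
    field_simp
    linarith
  have := discrim_lt_zero hm2.ne' hq
  rw [discrim] at this
  linarith

lemma integral_affine_mul_add_mul_pow {p q : ℝ → ℝ} {a b : ℝ}
    (hp : IntervalIntegrable p volume a b) (hq : IntervalIntegrable q volume a b)
    (A B c : ℝ) (r : ℕ) :
    ∫ t in a..b, ((A * t + B) * p t + c * q t) * t ^ r =
      A * (∫ t in a..b, p t * t ^ (r + 1)) + B * (∫ t in a..b, p t * t ^ r) +
        c * ∫ t in a..b, q t * t ^ r := by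
  have hp1 : IntervalIntegrable (fun t => p t * t ^ (r + 1)) volume a b :=
    hp.mul_continuousOn (continuous_pow _).continuousOn
  have hp0 : IntervalIntegrable (fun t => p t * t ^ r) volume a b :=
    hp.mul_continuousOn (continuous_pow _).continuousOn
  have hq0 : IntervalIntegrable (fun t => q t * t ^ r) volume a b :=
    hq.mul_continuousOn (continuous_pow _).continuousOn
  have : (fun t => ((A * t + B) * p t + c * q t) * t ^ r) =
      fun t => A * (p t * t ^ (r + 1)) + B * (p t * t ^ r) + c * (q t * t ^ r) := by
    ext t; ring
  rw [this, integral_add ((hp1.const_mul _).add (hp0.const_mul _)) (hq0.const_mul _),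
    integral_add (hp1.const_mul _) (hp0.const_mul _), intervalIntegral.integral_const_mul,
    intervalIntegral.integral_const_mul, intervalIntegral.integral_const_mul]

section SecondOrder

variable {F F' g : ℝ → ℝ} {a b : ℝ}

lemma integral_mul_id_eq_of_hasDerivAt (hF : ∀ z, HasDerivAt F (F' z) z)
    (hF' : ∀ z, HasDerivAt F' (g z) z) (hg : IntervalIntegrable g volume a b) :
    ∫ t in a..b, g t * t = (b * F' b - F b) - (a * F' a - F a) := by
  refine integral_eq_sub_of_hasDerivAt (f := fun t => t * F' t - F t) (fun t _ => ?_)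
    (hg.mul_continuousOn continuousOn_id)
  exact (((hasDerivAt_id' t).mul (hF' t)).sub (hF t)).congr_deriv (by ring)

lemma deriv_endpoints_eq_iff (hab : a ≠ b) (hF : ∀ z, HasDerivAt F (F' z) z)
    (hF' : ∀ z, HasDerivAt F' (g z) z) (hg : IntervalIntegrable g volume a b)
    (hFa : F a = 0) (hFb : F b = 0) (u v : ℝ) :
    (F' b = u ∧ F' a = v) ↔
      ((∫ t in a..b, g t) = u - v ∧ ∫ t in a..b, g t * t = b * u - a * v) := by
  rw [integral_eq_sub_of_hasDerivAt (fun t _ => hF' t) hg,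
    integral_mul_id_eq_of_hasDerivAt hF hF' hg, hFa, hFb]
  constructor
  · rintro ⟨rfl, rfl⟩
    constructor <;> ring
  · rintro ⟨h0, h1⟩
    have hu : F' b = u := mul_left_cancel₀ (sub_ne_zero.2 hab.symm) <| by
      linear_combination h1 - a * h0
    exact ⟨hu, by linarith⟩

lemma exists_hasDerivAt_hasDerivAt_eq_zero (hg : Continuous g) (a b : ℝ) :
    ∃ F F' : ℝ → ℝ, (∀ z, HasDerivAt F (F' z) z) ∧ (∀ z, HasDerivAt F' (g z) z) ∧
      F a = 0 ∧ F b = 0 := by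
  set G : ℝ → ℝ := fun t => ∫ u in a..t, g u
  have hG : ∀ t, HasDerivAt G (g t) t := fun t => (hg.integral_hasStrictDerivAt a t).hasDerivAt
  have hGc : Continuous G := continuous_iff_continuousAt.2 fun t => (hG t).continuousAt
  set H : ℝ → ℝ := fun t => ∫ u in a..t, G u
  have hH : ∀ t, HasDerivAt H (G t) t := fun t => (hGc.integral_hasStrictDerivAt a t).hasDerivAt
  have hHa : H a = 0 := integral_same
  refine ⟨fun t => H t - H b / (b - a) * (t - a), fun t => G t - H b / (b - a),
    fun z => ?_, fun z => (hG z).sub_const _, by simp [hHa], ?_⟩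
  · exact ((hH z).sub (((hasDerivAt_id' z).sub_const a).const_mul (H b / (b - a)))).congr_deriv
      (by ring)
  · rcases eq_or_ne a b with rfl | hab
    · simp [hHa]
    · simp [div_mul_cancel₀ _ (sub_ne_zero.2 hab.symm)]

end SecondOrder

lemma existsUnique_of_det_ne_zero {K : Type*} [Field K] {a b c d e f : K}
    (hdet : a * d - b * c ≠ 0) :
    ∃! p : K × K, p.1 * a + p.2 * b = e ∧ p.1 * c + p.2 * d = f := by
  refine ⟨((e * d - b * f) / (a * d - b * c), (a * f - e * c) / (a * d - b * c)), ?_, ?_⟩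
  · constructor <;> rw [div_mul_eq_mul_div, div_mul_eq_mul_div, ← add_div, div_eq_iff hdet]
      <;> ring
  · rintro ⟨A, B⟩ ⟨h1, h2⟩
    ext
    · rw [eq_div_iff hdet]
      linear_combination d * h1 - b * h2
    · rw [eq_div_iff hdet]
      linear_combination a * h2 - c * h1

lemma prod_one_add_mul_pow_pos {ι : Type*} {s : Finset ι} {x : ι → ℝ}
    (hx : ∀ a ∈ s, |x a| ≤ 1) (d : ι → ℕ) {t : ℝ} (ht : |t| < 1) :
    0 < ∏ a ∈ s, (1 + x a * t) ^ d a := by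
  refine Finset.prod_pos fun a ha => pow_pos ?_ _
  have hxt : |x a * t| < 1 := by
    rw [abs_mul]
    exact (mul_le_of_le_one_left (abs_nonneg t) (hx a ha)).trans_lt ht
  linarith [neg_abs_le (x a * t)]

theorem stmt1_general {ι : Type*} [Fintype ι] [DecidableEq ι]
    (x : ι → ℝ) (hx1 : ∀ a, |x a| ≤ 1)
    (d : ι → ℕ) (s : ι → ℝ)
    (pc : ℝ → ℝ) (hpc : ∀ t, pc t = ∏ a, (1 + x a * t) ^ d a)
    (α : ℕ → ℝ) (hα : ∀ r, α r = ∫ t in (-1:ℝ)..1, pc t * t ^ r)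
    (β : ℕ → ℝ)
    (hβ : ∀ r, β r = pc 1 + (-1:ℝ) ^ r * pc (-1) +
      ∫ t in (-1:ℝ)..1, (∑ a, (d a : ℝ) * s a * x a * (1 + x a * t) ^ (d a - 1) *
        ∏ b ∈ Finset.univ.erase a, (1 + x b * t) ^ d b) * t ^ r)
    (h : ℝ → ℝ → ℝ → ℝ)
    (hh : ∀ A B t, h A B t = (A * t + B) * pc t +
      ∑ a, 2 * (d a : ℝ) * s a * x a * (1 + x a * t) ^ (d a - 1) *
        ∏ b ∈ Finset.univ.erase a, (1 + x b * t) ^ d b) :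
    (∀ (A B : ℝ) (F F' : ℝ → ℝ),
      (∀ z, HasDerivAt F (F' z) z) → (∀ z, HasDerivAt F' (h A B z) z) →
      F (-1) = 0 → F 1 = 0 →
      ((F' 1 = -2 * pc 1 ∧ F' (-1) = 2 * pc (-1)) ↔
        (A * α 1 + B * α 0 = -2 * β 0 ∧ A * α 2 + B * α 1 = -2 * β 1))) ∧
    (∃! AB : ℝ × ℝ, ∀ F F' : ℝ → ℝ,
      (∀ z, HasDerivAt F (F' z) z) → (∀ z, HasDerivAt F' (h AB.1 AB.2 z) z) →
      F (-1) = 0 → F 1 = 0 →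
      (F' 1 = -2 * pc 1 ∧ F' (-1) = 2 * pc (-1))) := by
  set S : ℝ → ℝ := fun t => ∑ a, (d a : ℝ) * s a * x a * (1 + x a * t) ^ (d a - 1) *
    ∏ b ∈ Finset.univ.erase a, (1 + x b * t) ^ d b
  have hpc_cont : Continuous pc := by rw [funext hpc]; fun_prop
  have hh_eq : ∀ A B, h A B = fun t => (A * t + B) * pc t + 2 * S t := fun A B => funext fun t => by
    rw [hh, Finset.mul_sum]
    exact congrArg _ (Finset.sum_congr rfl fun a _ => by ring)
  have hh_cont : ∀ A B, Continuous (h A B) := fun A B => by rw [hh_eq]; fun_prop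
  have hmoment : ∀ A B r, ∫ t in (-1:ℝ)..1, h A B t * t ^ r =
      A * α (r + 1) + B * α r + 2 * (β r - pc 1 - (-1) ^ r * pc (-1)) := fun A B r => by
    rw [hh_eq, integral_affine_mul_add_mul_pow (hpc_cont.intervalIntegrable _ _)
      ((by fun_prop : Continuous S).intervalIntegrable _ _), hα, hα, hβ]
    ring
  have hbc : ∀ (A B : ℝ) (F F' : ℝ → ℝ),
      (∀ z, HasDerivAt F (F' z) z) → (∀ z, HasDerivAt F' (h A B z) z) →
      F (-1) = 0 → F 1 = 0 →
      ((F' 1 = -2 * pc 1 ∧ F' (-1) = 2 * pc (-1)) ↔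
        (A * α 1 + B * α 0 = -2 * β 0 ∧ A * α 2 + B * α 1 = -2 * β 1)) := by
    intro A B F F' hF hF' hFm hFp
    have h0 := hmoment A B 0
    have h1 := hmoment A B 1
    simp only [pow_zero, mul_one, pow_one, zero_add] at h0 h1
    rw [deriv_endpoints_eq_iff (by norm_num) hF hF' ((hh_cont A B).intervalIntegrable _ _) hFm hFp,
      h0, h1]
    constructor <;> rintro ⟨e0, e1⟩ <;> constructor <;> linarith
  refine ⟨hbc, ?_⟩
  have hpc_pos : ∀ t ∈ Ioo (-1 : ℝ) 1, 0 < pc t := fun t ht =>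
    hpc t ▸ prod_one_add_mul_pow_pos (fun a _ => hx1 a) d (abs_lt.2 ht)
  have hdet : α 1 * α 1 - α 0 * α 2 ≠ 0 := by
    have := sq_integral_mul_id_lt (by norm_num) (hpc_cont.intervalIntegrable (-1) 1) hpc_pos
    simp only [hα, pow_zero, mul_one, pow_one]
    nlinarith
  obtain ⟨AB, hAB, huniq⟩ := existsUnique_of_det_ne_zero hdet (e := -2 * β 0) (f := -2 * β 1)
  refine ⟨AB, fun F F' hF hF' hFm hFp => (hbc _ _ F F' hF hF' hFm hFp).2 hAB,
    fun AB' hAB' => huniq AB' ?_⟩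
  obtain ⟨F, F', hF, hF', hFm, hFp⟩ :=
    exists_hasDerivAt_hasDerivAt_eq_zero (hh_cont AB'.1 AB'.2) (-1) 1
  exact (hbc _ _ F F' hF hF' hFm hFp).1 (hAB' F F' hF hF' hFm hFp)

/-- boundary conditions `F'(±1) = ∓2 p_c(±1)` for the solution of
`F'' = h`, `F(±1) = 0` are equivalent to the linear system on `(A,B)`, and there
is exactly one pair `(A,B)` for which they hold. -/
theorem stmt1 {ι : Type*} [Fintype ι] [DecidableEq ι] [Nonempty ι]
    (x : ι → ℝ) (hx1 : ∀ a, |x a| ≤ 1) (hx0 : ∀ a, x a ≠ 0)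
    (d : ι → ℕ) (hd : ∀ a, 1 ≤ d a) (s : ι → ℝ)
    (pc : ℝ → ℝ) (hpc : ∀ t, pc t = ∏ a, (1 + x a * t) ^ d a)
    (α : ℕ → ℝ) (hα : ∀ r, α r = ∫ t in (-1:ℝ)..1, pc t * t ^ r)
    (β : ℕ → ℝ)
    (hβ : ∀ r, β r = pc 1 + (-1:ℝ) ^ r * pc (-1) +
      ∫ t in (-1:ℝ)..1, (∑ a, (d a : ℝ) * s a * x a * (1 + x a * t) ^ (d a - 1) *
        ∏ b ∈ Finset.univ.erase a, (1 + x b * t) ^ d b) * t ^ r)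
    (h : ℝ → ℝ → ℝ → ℝ)
    (hh : ∀ A B t, h A B t = (A * t + B) * pc t +
      ∑ a, 2 * (d a : ℝ) * s a * x a * (1 + x a * t) ^ (d a - 1) *
        ∏ b ∈ Finset.univ.erase a, (1 + x b * t) ^ d b) :
    (∀ (A B : ℝ) (F F' : ℝ → ℝ),
      (∀ z, HasDerivAt F (F' z) z) → (∀ z, HasDerivAt F' (h A B z) z) →
      F (-1) = 0 → F 1 = 0 →
      ((F' 1 = -2 * pc 1 ∧ F' (-1) = 2 * pc (-1)) ↔
        (A * α 1 + B * α 0 = -2 * β 0 ∧ A * α 2 + B * α 1 = -2 * β 1))) ∧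
    (∃! AB : ℝ × ℝ, ∀ F F' : ℝ → ℝ,
      (∀ z, HasDerivAt F (F' z) z) → (∀ z, HasDerivAt F' (h AB.1 AB.2 z) z) →
      F (-1) = 0 → F 1 = 0 →
      (F' 1 = -2 * pc 1 ∧ F' (-1) = 2 * pc (-1))) :=
  stmt1_general x hx1 d s pc hpc α hα β hβ h hh
end

section
/- Let P be a real polynomial of degree at most N+1 satisfying the interpolation conditions P(−1/x_a) = 2 d_a s_a x_a ∏_{b∈𝒜, b≠a} (1 − x_b/x_a) for every a ∈ 𝒜. Let F : ℝ → ℝ be twice differentiable with F''(z) = (∏_{a∈𝒜} (1 + x_a z)^{d_a − 1})·P(z) for all z, F(−1) = F(1) = 0, F'(−1) = 2·p_c(−1), and F'(1) = −2·p_c(1). Then F(z) > 0 for every z ∈ (−1, 1). -/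
/-!
Partial fractions turn the interpolation conditions into
`P t = (∏ₐ (1 + xₐ t)) · (q t + ∑ₐ cₐ / (1 + xₐ t))` with `q` affine and `cₐ = 2 dₐ sₐ xₐ ≥ 0`.
On `[-1, 1]` the product is positive and the second factor is convex, so `P`, and with it `F''`,
is negative on an interval at most: `F'` cannot fall, rise and fall again there. But if
`F z ≤ 0`, then, since `F` is positive just right of `-1`, `F'` is negative somewhere in
`(-1, z)` and nonnegative somewhere in `(z, 1)`; with `F'(-1) > 0 > F'(1)` this is such a
fall–rise–fall.
-/

open Polynomial Set

section PartialFractions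

variable {K : Type*} [Field K] {ι : Type*} [Fintype ι] [DecidableEq ι]

theorem eval_neg_inv_sum_C_mul_prod_erase {x : ι → K} (hx : ∀ a, x a ≠ 0) (c : ι → K) (a : ι) :
    (∑ b, C (c b) * ∏ b' ∈ Finset.univ.erase b, (1 + C (x b') * X)).eval (-1 / x a) =
      c a * ∏ b ∈ Finset.univ.erase a, (1 - x b / x a) := by
  have hroot : 1 + x a * (-1 / x a) = 0 := by field_simp [hx a]; ring
  simp only [eval_finsetSum, eval_mul, eval_C, eval_prod, eval_add, eval_one, eval_X]
  rw [Finset.sum_eq_single a]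
  · congr 1
    refine Finset.prod_congr rfl fun b _ => ?_
    ring
  · intro b _ hba
    rw [Finset.prod_eq_zero (Finset.mem_erase.mpr ⟨Ne.symm hba, Finset.mem_univ a⟩) hroot,
      mul_zero]
  · simp

theorem exists_natDegree_le_one_eq_prod_mul_add_sum {x c : ι → K} (hx : ∀ a, x a ≠ 0)
    (hinj : Function.Injective x) {P : K[X]} (hdeg : P.natDegree ≤ Fintype.card ι + 1)
    (hP : ∀ a, P.eval (-1 / x a) = c a * ∏ b ∈ Finset.univ.erase a, (1 - x b / x a)) :
    ∃ q : K[X], q.natDegree ≤ 1 ∧ P = (∏ a, (X - C (-1 / x a))) * q +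
      ∑ a, C (c a) * ∏ b ∈ Finset.univ.erase a, (1 + C (x b) * X) := by
  set P₀ := ∑ a, C (c a) * ∏ b ∈ Finset.univ.erase a, (1 + C (x b) * X)
  have hnodes : Function.Injective fun a => -1 / x a := fun a b hab => hinj <| by
    simpa [div_eq_mul_inv] using hab
  have hdvd : ∏ a, (X - C (-1 / x a)) ∣ P - P₀ :=
    Finset.prod_dvd_of_coprime ((pairwise_coprime_X_sub_C hnodes).set_pairwise _)
      fun a _ => dvd_iff_isRoot.mpr <| by
        simp [IsRoot, P₀, hP, eval_neg_inv_sum_C_mul_prod_erase hx]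
  obtain ⟨q, hq⟩ := hdvd
  refine ⟨q, ?_, sub_eq_iff_eq_add.mp hq⟩
  rcases eq_or_ne q 0 with rfl | hq0
  · simp
  have hP₀ : P₀.natDegree ≤ Fintype.card ι + 1 := by
    refine natDegree_sum_le_of_forall_le _ _ fun a _ => (natDegree_C_mul_le _ _).trans <|
      (natDegree_prod_le _ _).trans <| (Finset.sum_le_card_nsmul _ _ 1 fun b _ => ?_).trans ?_
    · exact (natDegree_add_le _ _).trans
        (max_le (by simp) ((natDegree_C_mul_le _ _).trans natDegree_X_le))
    · simpa using (Finset.card_erase_le (s := Finset.univ) (a := a)).trans (Nat.le_succ _)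
  have := (natDegree_sub_le P P₀).trans (max_le hdeg hP₀)
  rw [hq, (monic_prod_of_monic _ _ fun a _ => monic_X_sub_C _).natDegree_mul' hq0,
    natDegree_finsetProd_X_sub_C_eq_card, Finset.card_univ] at this
  omega

theorem exists_natDegree_le_one_eval_eq_prod_mul_add_sum_div {x c : ι → K} (hx : ∀ a, x a ≠ 0)
    (hinj : Function.Injective x) {P : K[X]} (hdeg : P.natDegree ≤ Fintype.card ι + 1)
    (hP : ∀ a, P.eval (-1 / x a) = c a * ∏ b ∈ Finset.univ.erase a, (1 - x b / x a)) :
    ∃ q : K[X], q.natDegree ≤ 1 ∧ ∀ t, (∀ a, 1 + x a * t ≠ 0) →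
      P.eval t = (∏ a, (1 + x a * t)) * (q.eval t + ∑ a, c a / (1 + x a * t)) := by
  obtain ⟨q, hq, rfl⟩ := exists_natDegree_le_one_eq_prod_mul_add_sum hx hinj hdeg hP
  refine ⟨C (∏ a, x a)⁻¹ * q, (natDegree_C_mul_le _ _).trans hq, fun t ht => ?_⟩
  have hnode : ∀ a, t - -1 / x a = (1 + x a * t) / x a := fun a => by field_simp [hx a]; ring
  have herase : ∀ a, ∏ b ∈ Finset.univ.erase a, (1 + x b * t) =
      (∏ b, (1 + x b * t)) / (1 + x a * t) := fun a =>
    eq_div_of_mul_eq (ht a) (Finset.prod_erase_mul _ _ (Finset.mem_univ a))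
  simp only [eval_add, eval_mul, eval_prod, eval_sub, eval_X, eval_C, eval_finsetSum, eval_one,
    hnode, Finset.prod_div_distrib, herase]
  rw [mul_add, Finset.mul_sum]
  congr 1
  · ring
  · exact Finset.sum_congr rfl fun a _ => by ring

end PartialFractions

theorem convexOn_eval_of_natDegree_le_one {q : ℝ[X]} (hq : q.natDegree ≤ 1) {s : Set ℝ}
    (hs : Convex ℝ s) : ConvexOn ℝ s fun t => q.eval t := by
  have hlin : ∀ t, q.eval t = q.coeff 1 * t + q.coeff 0 := fun t => by
    conv_lhs => rw [eq_X_add_C_of_natDegree_le_one hq]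
    simp
  refine ⟨hs, fun u _ v _ a b _ _ hab => le_of_eq ?_⟩
  simp only [hlin, smul_eq_mul]
  linear_combination (-q.coeff 0) * hab

theorem convexOn_inv_one_add_mul (x : ℝ) :
    ConvexOn ℝ {t | 0 < 1 + x * t} fun t => (1 + x * t)⁻¹ := by
  have hline : ∀ t, AffineMap.lineMap (1 : ℝ) (1 + x) t = 1 + x * t := fun t => by
    simp [AffineMap.lineMap_apply_module]; ring
  have := (convexOn_zpow (-1)).comp_affineMap (AffineMap.lineMap (1 : ℝ) (1 + x))
  simpa only [Function.comp_def, hline, zpow_neg_one, Set.preimage, Set.mem_Ioi] using this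

theorem convexOn_eval_add_sum_div {ι : Type*} [Fintype ι] {x c : ι → ℝ} (hc : ∀ a, 0 ≤ c a)
    {q : ℝ[X]} (hq : q.natDegree ≤ 1) {s : Set ℝ} (hs : Convex ℝ s)
    (hpos : ∀ t ∈ s, ∀ a, 0 < 1 + x a * t) :
    ConvexOn ℝ s fun t => q.eval t + ∑ a, c a / (1 + x a * t) := by
  have hterm : ∀ a, ConvexOn ℝ s fun t => c a / (1 + x a * t) := fun a => by
    simpa only [smul_eq_mul, div_eq_mul_inv] using
      ((convexOn_inv_one_add_mul (x a)).subset (fun t ht => hpos t ht a) hs).smul (hc a)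
  have hsum := Finset.sum_induction (s := Finset.univ) (fun a t => c a / (1 + x a * t))
    (ConvexOn ℝ s) (fun _ _ => ConvexOn.add) (convexOn_const 0 hs) fun a _ => hterm a
  rw [Finset.sum_fn] at hsum
  exact (convexOn_eval_of_natDegree_le_one hq hs).add hsum

theorem ordConnected_setOf_eval_neg {ι : Type*} [Fintype ι] [DecidableEq ι] {x c : ι → ℝ}
    (hx : ∀ a, x a ≠ 0) (hinj : Function.Injective x) (hc : ∀ a, 0 ≤ c a) {P : ℝ[X]}
    (hdeg : P.natDegree ≤ Fintype.card ι + 1)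
    (hP : ∀ a, P.eval (-1 / x a) = c a * ∏ b ∈ Finset.univ.erase a, (1 - x b / x a))
    {s : Set ℝ} (hs : Convex ℝ s) (hpos : ∀ t ∈ s, ∀ a, 0 < 1 + x a * t) :
    {t ∈ s | P.eval t < 0}.OrdConnected := by
  obtain ⟨q, hq, hPq⟩ := exists_natDegree_le_one_eval_eq_prod_mul_add_sum_div hx hinj hdeg hP
  have hsign : {t ∈ s | P.eval t < 0} = {t ∈ s | q.eval t + ∑ a, c a / (1 + x a * t) < 0} :=
    Set.ext fun t => and_congr_right fun ht => by
      rw [hPq t fun a => (hpos t ht a).ne']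
      exact smul_neg_iff_of_pos_left (Finset.prod_pos fun a _ => hpos t ht a)
  rw [hsign]
  exact ((convexOn_eval_add_sum_div hc hq hs hpos).convex_lt 0).ordConnected

theorem exists_mem_Ioo_hasDerivAt_neg {f f' : ℝ → ℝ} (hf : ∀ t, HasDerivAt f (f' t) t)
    {a b : ℝ} (hab : a < b) (h : f b < f a) : ∃ c ∈ Ioo a b, f' c < 0 := by
  obtain ⟨c, hc, hslope⟩ := exists_hasDerivAt_eq_slope f f' hab
    (fun t _ => (hf t).continuousAt.continuousWithinAt) fun t _ => hf t
  exact ⟨c, hc, hslope ▸ div_neg_of_neg_of_pos (sub_neg.mpr h) (sub_pos.mpr hab)⟩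

theorem exists_mem_Ioo_hasDerivAt_pos {f f' : ℝ → ℝ} (hf : ∀ t, HasDerivAt f (f' t) t)
    {a b : ℝ} (hab : a < b) (h : f a < f b) : ∃ c ∈ Ioo a b, 0 < f' c := by
  obtain ⟨c, hc, hslope⟩ := exists_hasDerivAt_eq_slope f f' hab
    (fun t _ => (hf t).continuousAt.continuousWithinAt) fun t _ => hf t
  exact ⟨c, hc, hslope ▸ div_pos (sub_pos.mpr h) (sub_pos.mpr hab)⟩

theorem le_of_ordConnected_setOf_deriv_neg {f f' : ℝ → ℝ} (hf : ∀ t, HasDerivAt f (f' t) t)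
    {s : Set ℝ} (hs : {t ∈ s | f' t < 0}.OrdConnected) {t₁ t₂ t₃ t₄ : ℝ} (hsub : Icc t₁ t₄ ⊆ s)
    (h₁₂ : t₁ < t₂) (h₂₃ : t₂ < t₃) (h₃₄ : t₃ < t₄) (hfall : f t₂ < f t₁) (hrise : f t₂ < f t₃) :
    f t₃ ≤ f t₄ := by
  by_contra! hfall'
  obtain ⟨η₁, hη₁, hη₁neg⟩ := exists_mem_Ioo_hasDerivAt_neg hf h₁₂ hfall
  obtain ⟨η₂, hη₂, hη₂pos⟩ := exists_mem_Ioo_hasDerivAt_pos hf h₂₃ hrise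
  obtain ⟨η₃, hη₃, hη₃neg⟩ := exists_mem_Ioo_hasDerivAt_neg hf h₃₄ hfall'
  have hmem : ∀ η ∈ Ioo t₁ t₄, η ∈ s := fun η hη => hsub (Ioo_subset_Icc_self hη)
  have := hs.out ⟨hmem η₁ ⟨hη₁.1, by linarith [hη₁.2]⟩, hη₁neg⟩
    ⟨hmem η₃ ⟨by linarith [hη₃.1], hη₃.2⟩, hη₃neg⟩
    ⟨(hη₁.2.trans hη₂.1).le, (hη₂.2.trans hη₃.1).le⟩
  exact this.2.not_gt hη₂pos

theorem exists_mem_Ioo_lt_of_hasDerivAt_pos {f : ℝ → ℝ} {a z f' : ℝ} (hf : HasDerivAt f f' a)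
    (hpos : 0 < f') (haz : a < z) : ∃ t ∈ Ioo a z, f a < f t := by
  have h := (hasDerivAt_iff_tendsto_slope_left_right.mp hf).2.eventually (lt_mem_nhds hpos)
  obtain ⟨t, hslope, ht⟩ := (h.and (Ioo_mem_nhdsGT haz)).exists
  exact ⟨t, ht, (slope_pos_iff ht.1).mp hslope⟩

theorem pos_of_ordConnected_setOf_deriv2_neg {F F' F'' : ℝ → ℝ} {a b : ℝ}
    (hF : ∀ t, HasDerivAt F (F' t) t) (hF' : ∀ t, HasDerivAt F' (F'' t) t)
    (hconn : {t ∈ Icc a b | F'' t < 0}.OrdConnected) (ha : F a = 0) (hb : F b = 0)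
    (hF'a : 0 < F' a) (hF'b : F' b < 0) {z : ℝ} (hz : z ∈ Ioo a b) : 0 < F z := by
  by_contra! hFz
  obtain ⟨t, ht, hFt⟩ := exists_mem_Ioo_lt_of_hasDerivAt_pos (hF a) hF'a hz.1
  obtain ⟨ξ₁, hξ₁, hfall⟩ := exists_mem_Ioo_hasDerivAt_neg hF ht.2 (by linarith)
  obtain ⟨ξ₂, hξ₂, hslope⟩ := exists_hasDerivAt_eq_slope F F' hz.2
    (fun t _ => (hF t).continuousAt.continuousWithinAt) fun t _ => hF t
  have hrise : 0 ≤ F' ξ₂ := hslope ▸ div_nonneg (by linarith) (by linarith [hz.2, hξ₂.2])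
  have := le_of_ordConnected_setOf_deriv_neg hF' hconn subset_rfl
    (by linarith [ht.1, hξ₁.1]) (hξ₁.2.trans hξ₂.1) hξ₂.2 (by linarith) (by linarith)
  linarith

theorem one_add_mul_pos_of_abs_lt {x t : ℝ} (hx : |x| < 1) (ht : t ∈ Icc (-1 : ℝ) 1) :
    0 < 1 + x * t := by
  have : |x * t| < 1 := by
    rw [abs_mul]
    exact (mul_le_of_le_one_right (abs_nonneg x) (abs_le.mpr ht)).trans_lt hx
  linarith [neg_abs_le (x * t)]

theorem stmt3_general {ι : Type*} [Fintype ι] [DecidableEq ι]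
    (x : ι → ℝ) (hx0 : ∀ a, 0 < |x a|) (hx1 : ∀ a, |x a| < 1)
    (hxinj : Function.Injective x)
    (d : ι → ℕ)
    (s : ι → ℝ) (hs : ∀ a, 0 ≤ s a * x a)
    (pc : ℝ → ℝ) (hpc : ∀ t, pc t = ∏ a, (1 + x a * t) ^ d a)
    (P : Polynomial ℝ) (hdeg : P.degree ≤ (Fintype.card ι + 1 : ℕ))
    (hint : ∀ a, P.eval (-1 / x a) = 2 * (d a : ℝ) * s a * x a *
      ∏ b ∈ Finset.univ.erase a, (1 - x b / x a))
    (F F' : ℝ → ℝ)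
    (hF' : ∀ z, HasDerivAt F (F' z) z)
    (hF'' : ∀ z, HasDerivAt F' ((∏ a, (1 + x a * z) ^ (d a - 1)) * P.eval z) z)
    (hFm : F (-1) = 0) (hFp : F 1 = 0)
    (hF'm : F' (-1) = 2 * pc (-1)) (hF'p : F' 1 = -2 * pc 1) :
    ∀ z ∈ Set.Ioo (-1:ℝ) 1, 0 < F z := by
  have hpos : ∀ t ∈ Icc (-1 : ℝ) 1, ∀ a, 0 < 1 + x a * t :=
    fun t ht a => one_add_mul_pos_of_abs_lt (hx1 a) ht
  have hprod : ∀ t ∈ Icc (-1 : ℝ) 1, ∀ e : ι → ℕ, 0 < ∏ a, (1 + x a * t) ^ e a :=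
    fun t ht e => Finset.prod_pos fun a _ => pow_pos (hpos t ht a) _
  have hc : ∀ a, 0 ≤ 2 * (d a : ℝ) * s a * x a := fun a => by
    simpa only [mul_assoc] using mul_nonneg (by positivity : (0 : ℝ) ≤ 2 * d a) (hs a)
  have hP : {t ∈ Icc (-1 : ℝ) 1 | P.eval t < 0}.OrdConnected :=
    ordConnected_setOf_eval_neg (fun a => abs_pos.mp (hx0 a)) hxinj hc
      (natDegree_le_of_degree_le hdeg) hint (convex_Icc _ _) hpos
  have hF''neg : {t ∈ Icc (-1 : ℝ) 1 | (∏ a, (1 + x a * t) ^ (d a - 1)) * P.eval t < 0} =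
      {t ∈ Icc (-1 : ℝ) 1 | P.eval t < 0} :=
    Set.ext fun t => and_congr_right fun ht => smul_neg_iff_of_pos_left (hprod t ht _)
  intro z hz
  refine pos_of_ordConnected_setOf_deriv2_neg hF' hF'' (hF''neg ▸ hP) hFm hFp ?_ ?_ hz
  · rw [hF'm, hpc]
    linarith [hprod (-1) (by norm_num) d]
  · rw [hF'p, hpc]
    linarith [hprod 1 (by norm_num) d]

/-- Guan–Hwang root counting: if `s_a x_a ≥ 0` for all `a`, `P` is a
polynomial of degree ≤ N+1 satisfying the interpolation conditions, and `F` solves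
`F''(z) = (∏_a (1 + x_a z)^{d_a - 1}) P(z)` with `F(±1) = 0`, `F'(±1) = ∓2 p_c(±1)`,
then `F > 0` on `(-1,1)`. -/
theorem stmt3 {ι : Type*} [Fintype ι] [DecidableEq ι] [Nonempty ι]
    (x : ι → ℝ) (hx0 : ∀ a, 0 < |x a|) (hx1 : ∀ a, |x a| < 1)
    (hxinj : Function.Injective x)
    (d : ι → ℕ) (hd : ∀ a, 1 ≤ d a)
    (s : ι → ℝ) (hs : ∀ a, 0 ≤ s a * x a)
    (pc : ℝ → ℝ) (hpc : ∀ t, pc t = ∏ a, (1 + x a * t) ^ d a)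
    (P : Polynomial ℝ) (hdeg : P.degree ≤ (Fintype.card ι + 1 : ℕ))
    (hint : ∀ a, P.eval (-1 / x a) = 2 * (d a : ℝ) * s a * x a *
      ∏ b ∈ Finset.univ.erase a, (1 - x b / x a))
    (F F' : ℝ → ℝ)
    (hF' : ∀ z, HasDerivAt F (F' z) z)
    (hF'' : ∀ z, HasDerivAt F' ((∏ a, (1 + x a * z) ^ (d a - 1)) * P.eval z) z)
    (hFm : F (-1) = 0) (hFp : F 1 = 0)
    (hF'm : F' (-1) = 2 * pc (-1)) (hF'p : F' 1 = -2 * pc 1) :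
    ∀ z ∈ Set.Ioo (-1:ℝ) 1, 0 < F z :=
  stmt3_general x hx0 hx1 hxinj d s hs pc hpc P hdeg hint F F' hF' hF'' hFm hFp hF'm hF'p
end

section
/- The pair A = 0, B = −(1 + d₀ + d_∞)(2 + d₀ + d_∞) solves the linear system A·α₁ + B·α₀ = −2β₀ and A·α₂ + B·α₁ = −2β₁. -/
/-!
Write `p = (1 + t)^a (1 - t)^b` and `Q = (1 + t)^(a+1) (1 - t)^(b+1) = (1 - t²) p`. Then
`Q' = p · ((a - b) - (a + b + 2) t)` and `Q'' = 2 w - (a + b + 1)(a + b + 2) p`, where `w` is the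
integrand in `β`. Integrating `Q'' t^r` by parts twice, with `Q(±1) = 0`, `Q'(1) = -2 p(1)` and
`Q'(-1) = 2 p(-1)`, gives `(a + b + 1)(a + b + 2) α_r - 2 β_r = -r (r - 1) ∫ Q t^(r-2)`,
which vanishes for `r = 0, 1`.
-/

open intervalIntegral

noncomputable def jacobiWeight (a b : ℕ) (t : ℝ) : ℝ := (1 + t) ^ a * (1 - t) ^ b

theorem hasDerivAt_jacobiWeight (a b : ℕ) (t : ℝ) :
    HasDerivAt (jacobiWeight a b)
      (a * jacobiWeight (a - 1) b t - b * jacobiWeight a (b - 1) t) t := by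
  have h := (((hasDerivAt_id t).const_add 1).fun_pow a).mul
    (((hasDerivAt_id t).const_sub 1).fun_pow b)
  refine h.congr_deriv ?_
  simp only [jacobiWeight, id]
  ring

theorem natCast_mul_one_add_mul_jacobiWeight_pred (a b : ℕ) (t : ℝ) :
    (a : ℝ) * ((1 + t) * jacobiWeight (a - 1) b t) = a * jacobiWeight a b t := by
  cases a with
  | zero => simp
  | succ a => simp only [jacobiWeight, Nat.add_sub_cancel]; ring

theorem natCast_mul_one_sub_mul_jacobiWeight_pred (a b : ℕ) (t : ℝ) :
    (b : ℝ) * ((1 - t) * jacobiWeight a (b - 1) t) = b * jacobiWeight a b t := by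
  cases b with
  | zero => simp
  | succ b => simp only [jacobiWeight, Nat.add_sub_cancel]; ring

theorem hasDerivAt_jacobiWeight_succ_succ (a b : ℕ) (t : ℝ) :
    HasDerivAt (jacobiWeight (a + 1) (b + 1))
      (jacobiWeight a b t * (a - b - (a + b + 2) * t)) t := by
  refine (hasDerivAt_jacobiWeight (a + 1) (b + 1) t).congr_deriv ?_
  simp only [jacobiWeight, Nat.add_sub_cancel]
  push_cast
  ring

theorem hasDerivAt_jacobiWeight_mul_linear (a b : ℕ) (t : ℝ) :
    HasDerivAt (fun t ↦ jacobiWeight a b t * (a - b - (a + b + 2) * t))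
      (2 * (a * (a + 1) * jacobiWeight (a - 1) b t + b * (b + 1) * jacobiWeight a (b - 1) t)
        - (a + b + 1) * (a + b + 2) * jacobiWeight a b t) t := by
  have h := (hasDerivAt_jacobiWeight a b t).mul
    (((hasDerivAt_id t).const_mul ((a : ℝ) + b + 2)).const_sub ((a : ℝ) - b))
  refine h.congr_deriv ?_
  simp only [id]
  linear_combination (-((a : ℝ) + b + 2)) * natCast_mul_one_add_mul_jacobiWeight_pred a b t
    + (-((a : ℝ) + b + 2)) * natCast_mul_one_sub_mul_jacobiWeight_pred a b t

-- For `r < 2` the truncated exponent `r - 2` is harmless: its coefficient `r * (r - 1)` is zero.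
theorem integral_deriv_deriv_mul_pow {Q Q' Q'' : ℝ → ℝ} (hQ : ∀ t, HasDerivAt Q (Q' t) t)
    (hQ' : ∀ t, HasDerivAt Q' (Q'' t) t) (hQ'' : Continuous Q'') (hQ_one : Q 1 = 0)
    (hQ_neg_one : Q (-1) = 0) (r : ℕ) :
    ∫ t in (-1 : ℝ)..1, Q'' t * t ^ r
      = Q' 1 - (-1) ^ r * Q' (-1) + r * (r - 1) * ∫ t in (-1 : ℝ)..1, Q t * t ^ (r - 2) := by
  have hQc : Continuous Q := continuous_iff_continuousAt.2 fun t ↦ (hQ t).continuousAt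
  have hQ'c : Continuous Q' := continuous_iff_continuousAt.2 fun t ↦ (hQ' t).continuousAt
  have first := integral_mul_deriv_eq_deriv_mul (a := -1) (b := 1)
    (fun t _ ↦ hasDerivAt_pow r t) (fun t _ ↦ hQ' t)
    (by apply Continuous.intervalIntegrable; fun_prop) (hQ''.intervalIntegrable _ _)
  have second := integral_mul_deriv_eq_deriv_mul (a := -1) (b := 1)
    (fun t _ ↦ (hasDerivAt_pow (r - 1) t).const_mul (r : ℝ)) (fun t _ ↦ hQ t)
    (by apply Continuous.intervalIntegrable; fun_prop) (hQ'c.intervalIntegrable _ _)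
  have hcoeff : (r : ℝ) * ((r - 1 : ℕ) : ℝ) = r * (r - 1) := by
    cases r <;> simp
  have hintegrand : (fun t : ℝ ↦ r * ((r - 1 : ℕ) * t ^ (r - 1 - 1)) * Q t)
      = fun t ↦ r * (r - 1) * (Q t * t ^ (r - 2)) := by
    funext t
    rw [Nat.sub_sub, ← hcoeff]
    ring
  simp only [mul_comm (Q'' _), hQ_one, hQ_neg_one, hintegrand, integral_const_mul, mul_zero,
    sub_zero, one_pow, one_mul] at first second ⊢
  linear_combination first - second

theorem jacobiWeight_moment_identity (a b r : ℕ) :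
    (1 + (a : ℝ) + b) * (2 + a + b) * (∫ t in (-1 : ℝ)..1, jacobiWeight a b t * t ^ r)
      - 2 * (jacobiWeight a b 1 + (-1) ^ r * jacobiWeight a b (-1)
        + ∫ t in (-1 : ℝ)..1, ((a : ℝ) * ((a : ℝ) + 1) * (1 + t) ^ (a - 1) * (1 - t) ^ b
          + (b : ℝ) * ((b : ℝ) + 1) * (1 + t) ^ a * (1 - t) ^ (b - 1)) * t ^ r)
      = -(r * (r - 1) * ∫ t in (-1 : ℝ)..1, jacobiWeight (a + 1) (b + 1) t * t ^ (r - 2)) := by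
  have key := integral_deriv_deriv_mul_pow (hasDerivAt_jacobiWeight_succ_succ a b)
    (hasDerivAt_jacobiWeight_mul_linear a b) (by unfold jacobiWeight; fun_prop)
    (by simp [jacobiWeight]) (by simp [jacobiWeight]) r
  have hintegrand : (fun t ↦ (2 * (a * (a + 1) * jacobiWeight (a - 1) b t
        + b * (b + 1) * jacobiWeight a (b - 1) t) - (a + b + 1) * (a + b + 2) * jacobiWeight a b t)
        * t ^ r)
      = fun t : ℝ ↦ 2 * (((a : ℝ) * ((a : ℝ) + 1) * (1 + t) ^ (a - 1) * (1 - t) ^ b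
          + (b : ℝ) * ((b : ℝ) + 1) * (1 + t) ^ a * (1 - t) ^ (b - 1)) * t ^ r)
        - (a + b + 1) * (a + b + 2) * (jacobiWeight a b t * t ^ r) := by
    funext t
    simp only [jacobiWeight]
    ring
  rw [hintegrand, integral_sub (by apply Continuous.intervalIntegrable; fun_prop)
    (by apply Continuous.intervalIntegrable; unfold jacobiWeight; fun_prop),
    integral_const_mul, integral_const_mul] at key
  have h_one : (b : ℝ) * jacobiWeight a b 1 = 0 := by cases b <;> simp [jacobiWeight]
  have h_neg_one : (a : ℝ) * jacobiWeight a b (-1) = 0 := by cases a <;> simp [jacobiWeight]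
  linear_combination -key + 2 * h_one + 2 * (-1) ^ r * h_neg_one

/-- in the limit `x_a → 0`, the pair `A = 0`,
`B = -(1 + d₀ + d_∞)(2 + d₀ + d_∞)` solves the linear system. -/
theorem stmt4 (d₀ d₁ : ℕ)
    (p : ℝ → ℝ) (hp : ∀ t, p t = (1 + t) ^ d₀ * (1 - t) ^ d₁)
    (α : ℕ → ℝ) (hα : ∀ r, α r = ∫ t in (-1:ℝ)..1, p t * t ^ r)
    (β : ℕ → ℝ)
    (hβ : ∀ r, β r = p 1 + (-1:ℝ) ^ r * p (-1) +
      ∫ t in (-1:ℝ)..1, ((d₀ : ℝ) * ((d₀ : ℝ) + 1) * (1 + t) ^ (d₀ - 1) * (1 - t) ^ d₁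
        + (d₁ : ℝ) * ((d₁ : ℝ) + 1) * (1 + t) ^ d₀ * (1 - t) ^ (d₁ - 1)) * t ^ r) :
    (0:ℝ) * α 1 + (-((1 + (d₀:ℝ) + (d₁:ℝ)) * (2 + (d₀:ℝ) + (d₁:ℝ)))) * α 0 = -2 * β 0 ∧
    (0:ℝ) * α 2 + (-((1 + (d₀:ℝ) + (d₁:ℝ)) * (2 + (d₀:ℝ) + (d₁:ℝ)))) * α 1 = -2 * β 1 := by
  obtain rfl : p = jacobiWeight d₀ d₁ := funext hp
  have moment_zero := jacobiWeight_moment_identity d₀ d₁ 0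
  have moment_one := jacobiWeight_moment_identity d₀ d₁ 1
  rw [hα, hα, hβ, hβ]
  constructor
  · linear_combination -moment_zero
  · linear_combination -moment_one
end

section
/- For all m, n ∈ ℕ: I(m,n,0) = 2^{m+n+1}·m!·n!/(m+n+1)!, I(m,n,1) = 2^{m+n+1}·(m−n)·m!·n!/(m+n+2)!, and I(m,n,2) = 2^{m+n+1}·(m² + n² + m + n − 2mn + 2)·m!·n!/(m+n+3)!. -/
/-!
Writing `t = ((1 + t) - (1 - t)) / 2` lowers the power of `t` at the cost of raising one of the
exponents `m`, `n`, so everything reduces to the Beta-type integrals `I(m,n,0)`. Integrating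
`d/dt [(1 + t)^(m+1) (1 - t)^(n+1)]`, whose boundary values vanish, gives
`(m+1) I(m,n+1,0) = (n+1) I(m+1,n,0)`, and induction on `n` from `I(m,0,0) = 2^(m+1)/(m+1)`
yields the closed form for `k = 0`; the cases `k = 1, 2` follow by the first identity.
-/

open intervalIntegral Nat

noncomputable def jacobiMoment (m n k : ℕ) : ℝ :=
  ∫ t in (-1:ℝ)..1, (1 + t) ^ m * (1 - t) ^ n * t ^ k

lemma intervalIntegrable_jacobiMoment_integrand (m n k : ℕ) :
    IntervalIntegrable (fun t : ℝ => (1 + t) ^ m * (1 - t) ^ n * t ^ k)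
      MeasureTheory.volume (-1) 1 :=
  (by fun_prop : Continuous _).intervalIntegrable _ _

lemma jacobiMoment_succ (m n k : ℕ) :
    jacobiMoment m n (k + 1) = (jacobiMoment (m + 1) n k - jacobiMoment m (n + 1) k) / 2 := by
  have hint := intervalIntegrable_jacobiMoment_integrand
  rw [jacobiMoment, jacobiMoment, jacobiMoment, ← integral_sub (hint ..) (hint ..),
    ← integral_div]
  exact integral_congr fun t _ => by ring

lemma succ_mul_jacobiMoment_succ_right (m n : ℕ) :
    (m + 1 : ℝ) * jacobiMoment m (n + 1) 0 = (n + 1) * jacobiMoment (m + 1) n 0 := by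
  have hint := intervalIntegrable_jacobiMoment_integrand
  have hderiv : ∀ t ∈ Set.uIcc (-1:ℝ) 1,
      HasDerivAt (fun t : ℝ => (1 + t) ^ (m + 1) * (1 - t) ^ (n + 1))
        ((m + 1) * ((1 + t) ^ m * (1 - t) ^ (n + 1) * t ^ 0)
          - (n + 1) * ((1 + t) ^ (m + 1) * (1 - t) ^ n * t ^ 0)) t := by
    intro t _
    refine ((((hasDerivAt_id t).const_add 1).fun_pow (m + 1)).mul
      (((hasDerivAt_id t).const_sub 1).fun_pow (n + 1))).congr_deriv ?_
    simp only [id, Nat.cast_add, Nat.cast_one, add_tsub_cancel_right, pow_zero, mul_one]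
    ring
  have hftc := integral_eq_sub_of_hasDerivAt hderiv
    (((hint ..).const_mul _).sub ((hint ..).const_mul _))
  rw [integral_sub ((hint ..).const_mul _) ((hint ..).const_mul _), integral_const_mul,
    integral_const_mul] at hftc
  norm_num at hftc
  simp only [jacobiMoment, pow_zero, mul_one]
  linarith

lemma jacobiMoment_zero_right (m : ℕ) : jacobiMoment m 0 0 = 2 ^ (m + 1) / (m + 1) := by
  simp only [jacobiMoment, pow_zero, mul_one]
  rw [integral_comp_add_left (fun t : ℝ => t ^ m), integral_pow]
  norm_num

theorem jacobiMoment_zero (m n : ℕ) :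
    jacobiMoment m n 0 = 2 ^ (m + n + 1) * m ! * n ! / (m + n + 1)! := by
  induction n generalizing m with
  | zero =>
    rw [jacobiMoment_zero_right, Nat.add_zero, factorial_succ, factorial_zero]
    push_cast
    field_simp
  | succ n ih =>
    have hrec : jacobiMoment m (n + 1) 0 = (n + 1) * jacobiMoment (m + 1) n 0 / (m + 1) := by
      rw [eq_div_iff (by positivity), mul_comm]
      exact succ_mul_jacobiMoment_succ_right m n
    rw [hrec, ih, show m + 1 + n + 1 = m + (n + 1) + 1 by omega, factorial_succ m,
      factorial_succ n]
    push_cast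
    field_simp

theorem jacobiMoment_one (m n : ℕ) :
    jacobiMoment m n 1 = 2 ^ (m + n + 1) * ((m : ℝ) - n) * m ! * n ! / (m + n + 2)! := by
  rw [jacobiMoment_succ, jacobiMoment_zero, jacobiMoment_zero,
    show m + 1 + n + 1 = m + n + 2 by omega, show m + (n + 1) + 1 = m + n + 2 by omega,
    factorial_succ m, factorial_succ n]
  push_cast
  field_simp
  ring

theorem jacobiMoment_two (m n : ℕ) :
    jacobiMoment m n 2 = 2 ^ (m + n + 1) *
      ((m : ℝ) ^ 2 + (n : ℝ) ^ 2 + m + n - 2 * m * n + 2) * m ! * n ! / (m + n + 3)! := by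
  rw [jacobiMoment_succ, jacobiMoment_one, jacobiMoment_one,
    show m + 1 + n + 1 = m + n + 2 by omega, show m + (n + 1) + 1 = m + n + 2 by omega,
    show m + 1 + n + 2 = m + n + 3 by omega, show m + (n + 1) + 2 = m + n + 3 by omega,
    factorial_succ m, factorial_succ n]
  push_cast
  field_simp
  ring

/-- explicit evaluation of `I(m,n,k) = ∫_{-1}^1 (1+t)^m (1-t)^n t^k dt`
for `k = 0, 1, 2`. -/
theorem stmt5 (I : ℕ → ℕ → ℕ → ℝ)
    (hI : ∀ m n k, I m n k = ∫ t in (-1:ℝ)..1, (1 + t) ^ m * (1 - t) ^ n * t ^ k) :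
    ∀ m n : ℕ,
      I m n 0 = 2 ^ (m + n + 1) * (m.factorial : ℝ) * (n.factorial : ℝ) /
        ((m + n + 1).factorial : ℝ) ∧
      I m n 1 = 2 ^ (m + n + 1) * ((m : ℝ) - (n : ℝ)) * (m.factorial : ℝ) *
        (n.factorial : ℝ) / ((m + n + 2).factorial : ℝ) ∧
      I m n 2 = 2 ^ (m + n + 1) *
        ((m : ℝ) ^ 2 + (n : ℝ) ^ 2 + (m : ℝ) + (n : ℝ) - 2 * (m : ℝ) * (n : ℝ) + 2) *
        (m.factorial : ℝ) * (n.factorial : ℝ) / ((m + n + 3).factorial : ℝ) := by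
  intro m n
  exact ⟨(hI m n 0).trans (jacobiMoment_zero m n), (hI m n 1).trans (jacobiMoment_one m n),
    (hI m n 2).trans (jacobiMoment_two m n)⟩
end

section
/- For all integers m, n ≥ 1 the following identities hold: (i) I(m−1,n,0)·m² + I(m,n−1,0)·n² = ½·I(m,n,0)·(m+n+1)(m+n); (ii) I(m−1,n,1)·m² + I(m,n−1,1)·n² = ½·I(m,n,1)·(m+n−1)(m+n+2); (iii) I(m−1,n,2)·m² + I(m,n−1,2)·n² = ½·I(m,n,2)·(m+n+3)(m+n) − I(m,n,1)·(m−n). -/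
/-!
Since `t = ((1 + t) - (1 - t)) / 2` and `t ^ 2 = 1 - (1 + t) * (1 - t)`, the integrals with
`k = 1, 2` are combinations of the Beta-type integrals `I(p,q,0)`. Integrating the derivative of
`(1 + t) ^ (p + 1) * (1 - t) ^ (q + 1)`, which vanishes at `±1`, and using `1 - t = 2 - (1 + t)`
gives `I(p+1,q,0) = 2(p+1)/(p+q+2) · I(p,q,0)` and its mirror image. So all three identities
become identities between rational functions of `m`, `n`, multiplied by `I(m-1,n-1,0)`.
-/

open intervalIntegral

noncomputable def betaMoment (m n k : ℕ) : ℝ :=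
  ∫ t in (-1:ℝ)..1, (1 + t) ^ m * (1 - t) ^ n * t ^ k

lemma intervalIntegrable_one_add_pow_mul_one_sub_pow_mul_pow (m n k : ℕ) (a b : ℝ) :
    IntervalIntegrable (fun t : ℝ => (1 + t) ^ m * (1 - t) ^ n * t ^ k)
      MeasureTheory.volume a b :=
  (by fun_prop : Continuous fun t : ℝ => (1 + t) ^ m * (1 - t) ^ n * t ^ k).intervalIntegrable a b

lemma succ_mul_betaMoment_succ_left_zero (m n : ℕ) :
    ((n : ℝ) + 1) * betaMoment (m + 1) n 0 = ((m : ℝ) + 1) * betaMoment m (n + 1) 0 := by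
  have hderiv : ∀ t : ℝ, HasDerivAt (fun t : ℝ => (1 + t) ^ (m + 1) * (1 - t) ^ (n + 1))
      (((m : ℝ) + 1) * ((1 + t) ^ m * (1 - t) ^ (n + 1) * t ^ 0)
        - ((n : ℝ) + 1) * ((1 + t) ^ (m + 1) * (1 - t) ^ n * t ^ 0)) t := by
    intro t
    have hleft : HasDerivAt (fun t : ℝ => (1 + t) ^ (m + 1))
        (((m : ℝ) + 1) * (1 + t) ^ m) t := by
      simpa using ((hasDerivAt_id t).const_add 1).fun_pow (m + 1)
    have hright : HasDerivAt (fun t : ℝ => (1 - t) ^ (n + 1))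
        (-(((n : ℝ) + 1) * (1 - t) ^ n)) t := by
      simpa using ((hasDerivAt_id t).const_sub 1).fun_pow (n + 1)
    exact (hleft.fun_mul hright).congr_deriv (by ring)
  have hftc := integral_eq_sub_of_hasDerivAt (a := -1) (b := 1) (fun t _ => hderiv t)
    (((intervalIntegrable_one_add_pow_mul_one_sub_pow_mul_pow _ _ _ _ _).const_mul _).sub
      ((intervalIntegrable_one_add_pow_mul_one_sub_pow_mul_pow _ _ _ _ _).const_mul _))
  rw [integral_sub ((intervalIntegrable_one_add_pow_mul_one_sub_pow_mul_pow _ _ _ _ _).const_mul _)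
      ((intervalIntegrable_one_add_pow_mul_one_sub_pow_mul_pow _ _ _ _ _).const_mul _),
    integral_const_mul, integral_const_mul] at hftc
  norm_num at hftc
  simp only [betaMoment, pow_zero, mul_one]
  linarith

lemma betaMoment_succ_right (m n k : ℕ) :
    betaMoment m (n + 1) k = 2 * betaMoment m n k - betaMoment (m + 1) n k := by
  unfold betaMoment
  rw [← integral_const_mul, ← integral_sub
    ((intervalIntegrable_one_add_pow_mul_one_sub_pow_mul_pow _ _ _ _ _).const_mul _)
    (intervalIntegrable_one_add_pow_mul_one_sub_pow_mul_pow _ _ _ _ _)]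
  exact integral_congr fun t _ => by ring

lemma betaMoment_add_one (m n k : ℕ) :
    betaMoment m n (k + 1) = (betaMoment (m + 1) n k - betaMoment m (n + 1) k) / 2 := by
  unfold betaMoment
  rw [← integral_sub (intervalIntegrable_one_add_pow_mul_one_sub_pow_mul_pow _ _ _ _ _)
    (intervalIntegrable_one_add_pow_mul_one_sub_pow_mul_pow _ _ _ _ _), ← integral_div]
  exact integral_congr fun t _ => by ring

lemma betaMoment_add_two (m n k : ℕ) :
    betaMoment m n (k + 2) = betaMoment m n k - betaMoment (m + 1) (n + 1) k := by
  unfold betaMoment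
  rw [← integral_sub (intervalIntegrable_one_add_pow_mul_one_sub_pow_mul_pow _ _ _ _ _)
    (intervalIntegrable_one_add_pow_mul_one_sub_pow_mul_pow _ _ _ _ _)]
  exact integral_congr fun t _ => by ring

lemma betaMoment_succ_left_zero (m n : ℕ) :
    betaMoment (m + 1) n 0 = 2 * ((m : ℝ) + 1) / ((m : ℝ) + n + 2) * betaMoment m n 0 := by
  rw [div_mul_eq_mul_div, eq_div_iff (by positivity)]
  linear_combination
    succ_mul_betaMoment_succ_left_zero m n + ((m : ℝ) + 1) * betaMoment_succ_right m n 0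

lemma betaMoment_succ_right_zero (m n : ℕ) :
    betaMoment m (n + 1) 0 = 2 * ((n : ℝ) + 1) / ((m : ℝ) + n + 2) * betaMoment m n 0 := by
  rw [betaMoment_succ_right, betaMoment_succ_left_zero]
  field_simp
  ring

/-- recursion identities for `I(m,n,k) = ∫_{-1}^1 (1+t)^m (1-t)^n t^k dt`. -/
theorem stmt6 (I : ℕ → ℕ → ℕ → ℝ)
    (hI : ∀ m n k, I m n k = ∫ t in (-1:ℝ)..1, (1 + t) ^ m * (1 - t) ^ n * t ^ k) :
    ∀ m n : ℕ, 1 ≤ m → 1 ≤ n →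
      (I (m - 1) n 0 * (m : ℝ) ^ 2 + I m (n - 1) 0 * (n : ℝ) ^ 2 =
        (1 / 2) * I m n 0 * ((m : ℝ) + (n : ℝ) + 1) * ((m : ℝ) + (n : ℝ))) ∧
      (I (m - 1) n 1 * (m : ℝ) ^ 2 + I m (n - 1) 1 * (n : ℝ) ^ 2 =
        (1 / 2) * I m n 1 * ((m : ℝ) + (n : ℝ) - 1) * ((m : ℝ) + (n : ℝ) + 2)) ∧
      (I (m - 1) n 2 * (m : ℝ) ^ 2 + I m (n - 1) 2 * (n : ℝ) ^ 2 =
        (1 / 2) * I m n 2 * ((m : ℝ) + (n : ℝ) + 3) * ((m : ℝ) + (n : ℝ))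
        - I m n 1 * ((m : ℝ) - (n : ℝ))) := by
  obtain rfl : I = betaMoment := funext fun m => funext fun n => funext (hI m n)
  intro m n hm hn
  obtain ⟨a, rfl⟩ : ∃ a, m = a + 1 := ⟨m - 1, by omega⟩
  obtain ⟨b, rfl⟩ : ∃ b, n = b + 1 := ⟨n - 1, by omega⟩
  simp only [Nat.add_sub_cancel, betaMoment_add_one _ _ 0, betaMoment_add_two _ _ 0,
    betaMoment_succ_left_zero, betaMoment_succ_right_zero]
  push_cast
  refine ⟨?_, ?_, ?_⟩ <;> field_simp <;> ring
end

section
/- Let d₀, d_∞ ∈ ℕ, x ∈ (−1,1) with x ≠ 0, and s, c ∈ ℝ. Define F(z) := (1+z)^{d₀+1}(1−z)^{d_∞+1}·((1+xz) + c(1−z²)). Then F''(−1/x) = 2sx·(1 − 1/x)^{d₀}·(1 + 1/x)^{d_∞} if and only if c = c(s,x). -/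
/-!
Put `u(z) = (1+z)^d₀ (1-z)^d₁` and `Q(z) = 1 + xz + c(1-z²)`. Then `F' = u · R` with
`R = ((d₀+1)(1-z) - (d₁+1)(1+z)) Q + (1-z²) Q'`, and where `1 ± z ≠ 0` the logarithmic derivative
`u' = u · (d₀/(1+z) - d₁/(1-z))` avoids the truncated exponents `d - 1`. At `z = -1/x` this gives
`F'' = u · (c D(x)/x² + 2(2 + d₀(1+x) + d₁(1-x)))`. Since `u(-1/x) ≠ 0` and `D(x) > 0` for
`|x| < 1`, the condition on `F''(-1/x)` is a nondegenerate linear equation in `c`, solved by `c(s,x)`.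
-/

noncomputable def Dden (d₀ d₁ : ℕ) (x : ℝ) : ℝ :=
  (2 + (d₀ : ℝ) * (1 + x) + (d₁ : ℝ) * (1 - x)) *
    (4 + (d₀ : ℝ) * (1 + x) + (d₁ : ℝ) * (1 - x)) +
  (4 + (d₀ : ℝ) + (d₁ : ℝ)) * (1 - x ^ 2)

/-- `c(s,x)`, with `d₁` in the role of `d_∞`. -/
noncomputable def cCoeff (d₀ d₁ : ℕ) (s x : ℝ) : ℝ :=
  -(2 * x ^ 2 * (2 + (d₀ : ℝ) * (1 + x) + (d₁ : ℝ) * (1 - x) - s * x)) / Dden d₀ d₁ x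
theorem HasDerivAt.fun_pow_of_ne_zero {𝕜 : Type*} [NontriviallyNormedField 𝕜] {f : 𝕜 → 𝕜}
    {f' z : 𝕜} (hf : HasDerivAt f f' z) (hz : f z ≠ 0) (n : ℕ) :
    HasDerivAt (fun t => f t ^ n) (f z ^ n * (n * f' / f z)) z := by
  refine (hf.fun_pow n).congr_deriv ?_
  rcases Nat.eq_zero_or_pos n with rfl | hn
  · simp
  · rw [← pow_sub_one_mul hn.ne' (f z)]
    field_simp

section OneAddPowMulOneSubPow

variable (n m : ℕ)

theorem hasDerivAt_one_add_pow_succ_mul_one_sub_pow_succ (z : ℝ) :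
    HasDerivAt (fun z : ℝ => (1 + z) ^ (n + 1) * (1 - z) ^ (m + 1))
      ((1 + z) ^ n * (1 - z) ^ m * ((n + 1) * (1 - z) - (m + 1) * (1 + z))) z := by
  have hp := ((hasDerivAt_id z).const_add 1).fun_pow (n + 1)
  have hm := ((hasDerivAt_id z).const_sub 1).fun_pow (m + 1)
  refine (hp.mul hm).congr_deriv ?_
  simp only [id_eq, Nat.add_sub_cancel, Nat.cast_add, Nat.cast_one]
  ring

theorem hasDerivAt_one_add_pow_mul_one_sub_pow {z : ℝ} (hp : 1 + z ≠ 0) (hm : 1 - z ≠ 0) :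
    HasDerivAt (fun z : ℝ => (1 + z) ^ n * (1 - z) ^ m)
      ((1 + z) ^ n * (1 - z) ^ m * (n / (1 + z) - m / (1 - z))) z := by
  have hp' := ((hasDerivAt_id z).const_add 1).fun_pow_of_ne_zero hp n
  have hm' := ((hasDerivAt_id z).const_sub 1).fun_pow_of_ne_zero hm m
  refine (hp'.mul hm').congr_deriv ?_
  simp only [id_eq]
  ring

end OneAddPowMulOneSubPow

section ExtremalPolynomial

variable (d₀ d₁ : ℕ) (x c : ℝ)

theorem hasDerivAt_quadratic_factor (z : ℝ) :
    HasDerivAt (fun z : ℝ => 1 + x * z + c * (1 - z ^ 2)) (x - 2 * c * z) z := by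
  have h := (((hasDerivAt_id z).const_mul x).const_add 1).add
    (((hasDerivAt_pow 2 z).const_sub 1).const_mul c)
  refine h.congr_deriv ?_
  ring

theorem deriv_extremal :
    deriv (fun z : ℝ => (1 + z) ^ (d₀ + 1) * (1 - z) ^ (d₁ + 1) * (1 + x * z + c * (1 - z ^ 2))) =
      fun z => (1 + z) ^ d₀ * (1 - z) ^ d₁ *
        (((d₀ + 1) * (1 - z) - (d₁ + 1) * (1 + z)) * (1 + x * z + c * (1 - z ^ 2)) +
          (1 - z ^ 2) * (x - 2 * c * z)) := by
  funext z
  refine (((hasDerivAt_one_add_pow_succ_mul_one_sub_pow_succ d₀ d₁ z).mul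
    (hasDerivAt_quadratic_factor x c z)).congr_deriv ?_).deriv
  ring

theorem deriv_deriv_extremal {z : ℝ} (hp : 1 + z ≠ 0) (hm : 1 - z ≠ 0) :
    deriv (deriv fun z : ℝ =>
        (1 + z) ^ (d₀ + 1) * (1 - z) ^ (d₁ + 1) * (1 + x * z + c * (1 - z ^ 2))) z =
      (1 + z) ^ d₀ * (1 - z) ^ d₁ *
        ((d₀ / (1 + z) - d₁ / (1 - z)) *
            (((d₀ + 1) * (1 - z) - (d₁ + 1) * (1 + z)) * (1 + x * z + c * (1 - z ^ 2)) +
              (1 - z ^ 2) * (x - 2 * c * z)) -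
          (d₀ + d₁ + 2) * (1 + x * z + c * (1 - z ^ 2)) +
          ((d₀ + 1) * (1 - z) - (d₁ + 1) * (1 + z) - 2 * z) * (x - 2 * c * z) -
          2 * c * (1 - z ^ 2)) := by
  rw [deriv_extremal]
  have hR : HasDerivAt (fun z : ℝ =>
      ((d₀ + 1) * (1 - z) - (d₁ + 1) * (1 + z)) * (1 + x * z + c * (1 - z ^ 2)) +
        (1 - z ^ 2) * (x - 2 * c * z))
      (-(d₀ + d₁ + 2) * (1 + x * z + c * (1 - z ^ 2)) +
          ((d₀ + 1) * (1 - z) - (d₁ + 1) * (1 + z) - 2 * z) * (x - 2 * c * z) -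
          2 * c * (1 - z ^ 2)) z := by
    have hlin : HasDerivAt (fun z : ℝ => (d₀ + 1) * (1 - z) - (d₁ + 1) * (1 + z))
        (-(d₀ + d₁ + 2)) z := by
      have h := (((hasDerivAt_id z).const_sub 1).const_mul ((d₀ : ℝ) + 1)).sub
        (((hasDerivAt_id z).const_add 1).const_mul ((d₁ : ℝ) + 1))
      exact h.congr_deriv (by ring)
    have hsq : HasDerivAt (fun z : ℝ => 1 - z ^ 2) (-(2 * z)) z :=
      ((hasDerivAt_pow 2 z).const_sub 1).congr_deriv (by ring)
    have hlast : HasDerivAt (fun z : ℝ => x - 2 * c * z) (-(2 * c)) z :=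
      (((hasDerivAt_id z).const_mul (2 * c)).const_sub x).congr_deriv (by simp)
    exact ((hlin.mul (hasDerivAt_quadratic_factor x c z)).add (hsq.mul hlast)).congr_deriv
      (by ring)
  refine (((hasDerivAt_one_add_pow_mul_one_sub_pow d₀ d₁ hp hm).mul hR).congr_deriv ?_).deriv
  ring

end ExtremalPolynomial

theorem deriv_deriv_extremal_neg_inv (d₀ d₁ : ℕ) {x : ℝ} (c : ℝ) (hx0 : x ≠ 0)
    (hp : 1 - 1 / x ≠ 0) (hm : 1 + 1 / x ≠ 0) :
    deriv (deriv fun z : ℝ =>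
        (1 + z) ^ (d₀ + 1) * (1 - z) ^ (d₁ + 1) * (1 + x * z + c * (1 - z ^ 2))) (-1 / x) =
      (1 - 1 / x) ^ d₀ * (1 + 1 / x) ^ d₁ *
        (c * Dden d₀ d₁ x / x ^ 2 + 2 * (2 + d₀ * (1 + x) + d₁ * (1 - x))) := by
  have hp' : 1 + -1 / x = 1 - 1 / x := by ring
  have hm' : 1 - -1 / x = 1 + 1 / x := by ring
  rw [deriv_deriv_extremal d₀ d₁ x c (hp' ▸ hp) (hm' ▸ hm), hp', hm']
  have hx1 : x - 1 ≠ 0 := by contrapose! hp; rw [one_sub_div hx0, hp, zero_div]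
  have hx2 : x + 1 ≠ 0 := by contrapose! hm; rw [one_add_div hx0, hm, zero_div]
  congr 1
  rw [Dden]
  field_simp
  ring

theorem Dden_pos (d₀ d₁ : ℕ) {x : ℝ} (hx : x ∈ Set.Ioo (-1 : ℝ) 1) : 0 < Dden d₀ d₁ x := by
  obtain ⟨hlo, hhi⟩ := hx
  have ha : 0 ≤ (d₀ : ℝ) * (1 + x) + d₁ * (1 - x) := by
    have : 0 ≤ 1 + x := by linarith
    have : 0 ≤ 1 - x := by linarith
    positivity
  have hx2 : 0 < 1 - x ^ 2 := by nlinarith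
  exact add_pos (mul_pos (by linarith) (by linarith)) (mul_pos (by positivity) hx2)

/-- with `F(z) = (1+z)^{d₀+1}(1-z)^{d_∞+1}((1+xz) + c(1-z²))`, the
condition `F''(-1/x) = 2sx (1-1/x)^{d₀} (1+1/x)^{d_∞}` holds iff `c = c(s,x)`. -/
theorem stmt7 (d₀ d₁ : ℕ) (x : ℝ) (hx : x ∈ Set.Ioo (-1:ℝ) 1) (hx0 : x ≠ 0)
    (s c : ℝ) (F : ℝ → ℝ)
    (hF : ∀ z, F z = (1 + z) ^ (d₀ + 1) * (1 - z) ^ (d₁ + 1) *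
      ((1 + x * z) + c * (1 - z ^ 2))) :
    deriv (deriv F) (-1 / x) = 2 * s * x * (1 - 1 / x) ^ d₀ * (1 + 1 / x) ^ d₁ ↔
      c = cCoeff d₀ d₁ s x := by
  obtain rfl : F = _ := funext hF
  have hD : Dden d₀ d₁ x ≠ 0 := (Dden_pos d₀ d₁ hx).ne'
  have hp : 1 - 1 / x ≠ 0 := by
    rw [one_sub_div hx0]; exact div_ne_zero (by linarith [hx.2]) hx0
  have hm : 1 + 1 / x ≠ 0 := by
    rw [one_add_div hx0]; exact div_ne_zero (by linarith [hx.1]) hx0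
  rw [deriv_deriv_extremal_neg_inv d₀ d₁ c hx0 hp hm,
    show 2 * s * x * (1 - 1 / x) ^ d₀ * (1 + 1 / x) ^ d₁ =
      (1 - 1 / x) ^ d₀ * (1 + 1 / x) ^ d₁ * (2 * s * x) by ring,
    mul_right_inj' (by positivity), cCoeff, eq_div_iff hD]
  constructor <;> intro h
  · field_simp at h
    linear_combination h
  · field_simp
    linear_combination h
end

section
/- Let x₁, x₂ ∈ (−1,1), set x₃ := −(x₁+x₂)/(1+x₁x₂), and let r ∈ ℝ with r ≠ 0. Then there exist a real λ > 0 and reals a₀, a₁, a₂ such that for all z ∈ ℝ: (1+x₁z)(1+x₂z)(1+x₃z) + (1−z²)(a₀ + a₁z + a₂z²) = λ·(z² + rz − 1)². (Note that x₁x₂x₃ + x₁ + x₂ + x₃ = 0 by construction.) -/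
/-- for `x₁, x₂ ∈ (-1,1)`, `x₃ = -(x₁+x₂)/(1+x₁x₂)` and `r ≠ 0`,
there are `λ > 0` and `a₀, a₁, a₂` with
`(1+x₁z)(1+x₂z)(1+x₃z) + (1-z²)(a₀+a₁z+a₂z²) = λ (z²+rz-1)²` for all `z`. -/
theorem stmt8 (x₁ x₂ : ℝ) (h₁ : x₁ ∈ Set.Ioo (-1:ℝ) 1) (h₂ : x₂ ∈ Set.Ioo (-1:ℝ) 1)
    (x₃ : ℝ) (hx₃ : x₃ = -(x₁ + x₂) / (1 + x₁ * x₂)) (r : ℝ) (hr : r ≠ 0) :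
    ∃ lam : ℝ, 0 < lam ∧ ∃ a₀ a₁ a₂ : ℝ, ∀ z : ℝ,
      (1 + x₁ * z) * (1 + x₂ * z) * (1 + x₃ * z) +
        (1 - z ^ 2) * (a₀ + a₁ * z + a₂ * z ^ 2) =
      lam * (z ^ 2 + r * z - 1) ^ 2 := by
  obtain ⟨h1a, h1b⟩ := h₁
  obtain ⟨h2a, h2b⟩ := h₂
  have habs : |x₁ * x₂| < 1 := by
    rw [abs_mul]
    calc |x₁| * |x₂| ≤ |x₁| * 1 := by
          exact mul_le_mul_of_nonneg_left (le_of_lt (abs_lt.mpr ⟨h2a, h2b⟩)) (abs_nonneg _)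
      _ = |x₁| := mul_one _
      _ < 1 := abs_lt.mpr ⟨h1a, h1b⟩
  have hs : (0:ℝ) < 1 + x₁ * x₂ := by
    have := neg_lt_of_abs_lt habs; linarith
  have hsne : (1 + x₁ * x₂) ≠ 0 := ne_of_gt hs
  have hr2 : (0:ℝ) < r ^ 2 := by positivity
  set lam : ℝ := (1 - x₁ ^ 2) * (1 - x₂ ^ 2) / ((1 + x₁ * x₂) * r ^ 2) with hlam
  have hx1sq : (0:ℝ) < 1 - x₁ ^ 2 := by nlinarith
  have hx2sq : (0:ℝ) < 1 - x₂ ^ 2 := by nlinarith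
  have hlampos : 0 < lam := by
    apply div_pos (by positivity) (by positivity)
  refine ⟨lam, hlampos, lam - 1, -2 * r * lam - (x₁ + x₂ + x₃), -lam, fun z => ?_⟩
  subst hx₃
  rw [hlam]
  field_simp
  ring
end

section
/- Let d₀, d_∞ ∈ ℕ and s ∈ ℝ. (i) If s < −d₀(d₀+1), then there exists x₀ ∈ (0,1) such that for every x ∈ (x₀,1): c(s,x) < −1/2 and there exists z ∈ (−1,0) with (1+xz) + c(s,x)(1−z²) ≤ 0. (ii) If s > d_∞(d_∞+1), then there exists x₀ ∈ (0,1) such that for every x ∈ (−1,−x₀): c(s,x) < −1/2 and there exists z ∈ (0,1) with (1+xz) + c(s,x)(1−z²) ≤ 0. -/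
lemma key (c x : ℝ) (hc : c < -(1/2)) (hsq : 1 - x^2 ≤ (2*c+1)^2) :
    1 + x * (x/(2*c)) + c * (1 - (x/(2*c))^2) ≤ 0 := by
  have h2c : 2*c < 0 := by linarith
  have hcne : c ≠ 0 := by intro h; rw [h] at hc; norm_num at hc
  have hexp : 1 + x*(x/(2*c)) + c*(1-(x/(2*c))^2) = (4*c + 4*c^2 + x^2)/(4*c) := by
    field_simp
    ring
  rw [hexp]
  apply div_nonpos_of_nonneg_of_nonpos
  · nlinarith
  · linarith

lemma cCoeff_contAt (d₀ d₁ : ℕ) (s : ℝ) {a : ℝ} (ha : Dden d₀ d₁ a ≠ 0) :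
    ContinuousAt (fun x => cCoeff d₀ d₁ s x) a := by
  unfold cCoeff
  apply ContinuousAt.div
  · fun_prop
  · unfold Dden; fun_prop
  · exact ha

/-- nonexistence range: for `s` outside the bounds, positivity of
`(1+xz)+c(s,x)(1-z²)` fails on `(-1,1)` for `|x|` close to 1. -/
theorem stmt11 (d₀ d₁ : ℕ) (s : ℝ) :
    ((s < -((d₀ : ℝ) * ((d₀ : ℝ) + 1))) → ∃ x₀ ∈ Set.Ioo (0:ℝ) 1,
      ∀ x ∈ Set.Ioo x₀ 1, cCoeff d₀ d₁ s x < -(1 / 2) ∧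
        ∃ z ∈ Set.Ioo (-1:ℝ) 0, (1 + x * z) + cCoeff d₀ d₁ s x * (1 - z ^ 2) ≤ 0) ∧
    (((d₁ : ℝ) * ((d₁ : ℝ) + 1) < s) → ∃ x₀ ∈ Set.Ioo (0:ℝ) 1,
      ∀ x ∈ Set.Ioo (-1:ℝ) (-x₀), cCoeff d₀ d₁ s x < -(1 / 2) ∧
        ∃ z ∈ Set.Ioo (0:ℝ) 1, (1 + x * z) + cCoeff d₀ d₁ s x * (1 - z ^ 2) ≤ 0) := by
  constructor
  · intro hs
    have hDval : Dden d₀ d₁ 1 = (2+2*(d₀:ℝ))*(4+2*(d₀:ℝ)) := by unfold Dden; ring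
    have hDpos : 0 < Dden d₀ d₁ 1 := by rw [hDval]; positivity
    have hc1 : cCoeff d₀ d₁ s 1 < -(1/2) := by
      unfold cCoeff
      rw [div_lt_iff₀ hDpos, hDval]
      nlinarith
    have hFc : ContinuousAt (fun x : ℝ => 2*cCoeff d₀ d₁ s x + 1 + Real.sqrt (1-x^2)) 1 := by
      apply ContinuousAt.add
      · apply ContinuousAt.add
        · exact ContinuousAt.mul continuousAt_const (cCoeff_contAt d₀ d₁ s hDpos.ne')
        · exact continuousAt_const
      · fun_prop
    have hF1 : (fun x : ℝ => 2*cCoeff d₀ d₁ s x + 1 + Real.sqrt (1-x^2)) 1 < 0 := by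
      simp only
      rw [show (1:ℝ)-(1:ℝ)^2 = 0 by norm_num, Real.sqrt_zero]
      linarith
    have hev : ∀ᶠ x in nhds (1:ℝ), 2*cCoeff d₀ d₁ s x + 1 + Real.sqrt (1-x^2) < 0 :=
      hFc.eventually_lt_const hF1
    obtain ⟨δ, hδ, hball⟩ := Metric.eventually_nhds_iff.mp hev
    refine ⟨max (1-δ) (1/2), ⟨lt_of_lt_of_le one_half_pos (le_max_right _ _),
      max_lt (by linarith) (by norm_num)⟩, ?_⟩
    intro x hx
    obtain ⟨hx1, hx2⟩ := hx
    have hxhalf : (1:ℝ)/2 < x := lt_of_le_of_lt (le_max_right _ _) hx1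
    have hxpos : 0 < x := by linarith
    have h1δ : 1-δ < x := lt_of_le_of_lt (le_max_left _ _) hx1
    have hFx : 2*cCoeff d₀ d₁ s x + 1 + Real.sqrt (1-x^2) < 0 := by
      apply hball
      rw [Real.dist_eq, abs_of_neg (by linarith : x - 1 < 0)]
      linarith
    have hsnn := Real.sqrt_nonneg (1-x^2)
    set c := cCoeff d₀ d₁ s x with hcdef
    have hclt : c < -(1/2) := by linarith
    have h2c : 2*c < -1 := by linarith
    refine ⟨hclt, x/(2*c), ⟨?_, ?_⟩, ?_⟩
    · rw [lt_div_iff_of_neg (by linarith : 2*c < 0)]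
      linarith
    · exact div_neg_of_pos_of_neg hxpos (by linarith)
    · have hsq : 1 - x^2 ≤ (2*c+1)^2 := by
        have hs2 : Real.sqrt (1-x^2)^2 = 1-x^2 := Real.sq_sqrt (by nlinarith)
        nlinarith [hFx, hsnn]
      have := key c x hclt hsq
      linarith [this]
  · intro hs
    have hDval : Dden d₀ d₁ (-1) = (2+2*(d₁:ℝ))*(4+2*(d₁:ℝ)) := by unfold Dden; ring
    have hDpos : 0 < Dden d₀ d₁ (-1) := by rw [hDval]; positivity
    have hc1 : cCoeff d₀ d₁ s (-1) < -(1/2) := by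
      unfold cCoeff
      rw [div_lt_iff₀ hDpos, hDval]
      nlinarith
    have hFc : ContinuousAt (fun x : ℝ => 2*cCoeff d₀ d₁ s x + 1 + Real.sqrt (1-x^2)) (-1) := by
      apply ContinuousAt.add
      · apply ContinuousAt.add
        · exact ContinuousAt.mul continuousAt_const (cCoeff_contAt d₀ d₁ s hDpos.ne')
        · exact continuousAt_const
      · fun_prop
    have hF1 : (fun x : ℝ => 2*cCoeff d₀ d₁ s x + 1 + Real.sqrt (1-x^2)) (-1) < 0 := by
      simp only
      rw [show (1:ℝ)-(-1:ℝ)^2 = 0 by norm_num, Real.sqrt_zero]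
      linarith
    have hev : ∀ᶠ x in nhds (-1:ℝ), 2*cCoeff d₀ d₁ s x + 1 + Real.sqrt (1-x^2) < 0 :=
      hFc.eventually_lt_const hF1
    obtain ⟨δ, hδ, hball⟩ := Metric.eventually_nhds_iff.mp hev
    refine ⟨max (1-δ) (1/2), ⟨lt_of_lt_of_le one_half_pos (le_max_right _ _),
      max_lt (by linarith) (by norm_num)⟩, ?_⟩
    intro x hx
    obtain ⟨hx1, hx2⟩ := hx
    have hxhalf : x < -(1/2) := by
      have := le_max_right (1-δ) (1/2)
      linarith [hx2, neg_le_neg this]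
    have hxneg : x < 0 := by linarith
    have h1δ : x < -(1-δ) := by
      have := le_max_left (1-δ) (1/2)
      linarith [hx2, neg_le_neg this]
    have hFx : 2*cCoeff d₀ d₁ s x + 1 + Real.sqrt (1-x^2) < 0 := by
      apply hball
      rw [Real.dist_eq, abs_of_pos (by linarith : 0 < x - (-1))]
      linarith
    have hsnn := Real.sqrt_nonneg (1-x^2)
    set c := cCoeff d₀ d₁ s x with hcdef
    have hclt : c < -(1/2) := by linarith
    have h2c : 2*c < -1 := by linarith
    refine ⟨hclt, x/(2*c), ⟨?_, ?_⟩, ?_⟩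
    · exact div_pos_of_neg_of_neg hxneg (by linarith)
    · rw [div_lt_iff_of_neg (by linarith : 2*c < 0)]
      linarith
    · have hsq : 1 - x^2 ≤ (2*c+1)^2 := by
        have hs2 : Real.sqrt (1-x^2)^2 = 1-x^2 := Real.sq_sqrt (by nlinarith)
        nlinarith [hFx, hsnn]
      have := key c x hclt hsq
      linarith [this]
end

section
/- Suppose reals x₁, x₂, s, s₁, s₂ satisfy (E1) and (E2) and x₁ ≠ x₂. Then x₁·(6 + s₁x₁(x₂² − 3)) + x₂·(6 + s₂x₂(x₁² − 3)) = 0. -/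
/-- eliminating `s` from (E1) and (E2), with `x₁ ≠ x₂`, gives the
hypersurface equation `x₁(6 + s₁x₁(x₂² - 3)) + x₂(6 + s₂x₂(x₁² - 3)) = 0`. -/
theorem stmt13 (x₁ x₂ s s₁ s₂ : ℝ)
    (hE1 : x₁ * (s₁ * (x₁ - x₂) - 2 + (1 - s) * x₁ * x₂) + 3 * (s - 1) * x₂ = 0)
    (hE2 : x₂ * (s₂ * (x₂ - x₁) - 2 + (1 - s) * x₁ * x₂) + 3 * (s - 1) * x₁ = 0)
    (hne : x₁ ≠ x₂) :
    x₁ * (6 + s₁ * x₁ * (x₂ ^ 2 - 3)) + x₂ * (6 + s₂ * x₂ * (x₁ ^ 2 - 3)) = 0 := by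
  have hd : x₁ - x₂ ≠ 0 := sub_ne_zero.mpr hne
  have hK : s₁ * x₁ + s₂ * x₂ - 2 - (s - 1) * (x₁ * x₂ + 3) = 0 := by
    have h : (x₁ - x₂) * (s₁ * x₁ + s₂ * x₂ - 2 - (s - 1) * (x₁ * x₂ + 3)) = 0 := by
      linear_combination hE1 - hE2
    exact (mul_eq_zero.mp h).resolve_left hd
  linear_combination (-(x₁ * x₂ + 3) / 2) * hE1 + (-(x₁ * x₂ + 3) / 2) * hE2 +
    (-(x₁ + x₂) * (3 - x₁ * x₂) / 2) * hK
end

section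
/- Let x₁, x₂ ∈ ℝ with 0 < |x₁| < 1 and 0 < |x₂| < 1, and let s₁, s₂ ∈ ℝ satisfy s₁x₁ < 2 and s₂x₂ < 2. If x₁·(6 + s₁x₁(x₂² − 3)) + x₂·(6 + s₂x₂(x₁² − 3)) = 0, then x₁x₂ < 0. -/
/-- if `0 < |x_a| < 1`, `s_a x_a < 2` and the hypersurface equation
holds, then `x₁ x₂ < 0`. -/
theorem stmt14 (x₁ x₂ s₁ s₂ : ℝ)
    (h₁ : 0 < |x₁|) (h₁' : |x₁| < 1) (h₂ : 0 < |x₂|) (h₂' : |x₂| < 1)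
    (hs₁ : s₁ * x₁ < 2) (hs₂ : s₂ * x₂ < 2)
    (h : x₁ * (6 + s₁ * x₁ * (x₂ ^ 2 - 3)) + x₂ * (6 + s₂ * x₂ * (x₁ ^ 2 - 3)) = 0) :
    x₁ * x₂ < 0 := by
  have hx1 : x₁ ≠ 0 := abs_pos.mp h₁
  have hx2 : x₂ ≠ 0 := abs_pos.mp h₂
  have hq1 : x₁ ^ 2 < 1 := by nlinarith [sq_abs x₁, sq_nonneg (|x₁| - 1)]
  have hq2 : x₂ ^ 2 < 1 := by nlinarith [sq_abs x₂, sq_nonneg (|x₂| - 1)]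
  have hA : 0 < 6 + s₁ * x₁ * (x₂ ^ 2 - 3) := by nlinarith
  have hB : 0 < 6 + s₂ * x₂ * (x₁ ^ 2 - 3) := by nlinarith
  by_contra hcon
  push_neg at hcon
  have hx : 0 < x₁ * x₂ := lt_of_le_of_ne hcon (by
    intro hh; rcases mul_eq_zero.mp hh.symm with h' | h' <;> [exact hx1 h'; exact hx2 h'])
  have hx1sq : 0 < x₁ ^ 2 := by positivity
  have key : x₁ ^ 2 * (6 + s₁ * x₁ * (x₂ ^ 2 - 3)) +
      (x₁ * x₂) * (6 + s₂ * x₂ * (x₁ ^ 2 - 3)) = 0 := by linear_combination x₁ * h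
  nlinarith [mul_pos hx1sq hA, mul_pos hx hB]
end

section
/- Let x₁, x₂ ∈ ℝ with 0 < |x_a| < 1 (a = 1,2) and x₁x₂ < 0, and let c ∈ ℝ with s := 2(1−c) ≥ 0. Then for every z ∈ (−1,1): (1 − z²)·((1 + x₁z)(1 + x₂z) + c·x₁x₂·(1 − z²)) > 0. -/
/-- if `0 < |x_a| < 1`, `x₁ x₂ < 0` and `s = 2(1-c) ≥ 0`, then the
extremal polynomial `(1-z²)((1+x₁z)(1+x₂z) + c x₁x₂ (1-z²))` is positive on `(-1,1)`. -/
theorem stmt16 (x₁ x₂ : ℝ)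
    (h₁ : 0 < |x₁|) (h₁' : |x₁| < 1) (h₂ : 0 < |x₂|) (h₂' : |x₂| < 1)
    (hprod : x₁ * x₂ < 0) (c : ℝ) (hs : 0 ≤ 2 * (1 - c)) :
    ∀ z ∈ Set.Ioo (-1:ℝ) 1,
      0 < (1 - z ^ 2) * ((1 + x₁ * z) * (1 + x₂ * z) + c * x₁ * x₂ * (1 - z ^ 2)) := by
  rintro z ⟨hz1, hz2⟩
  obtain ⟨ha1, ha2⟩ := abs_lt.mp h₁'
  obtain ⟨hb1, hb2⟩ := abs_lt.mp h₂'
  have hz : (0:ℝ) < 1 - z ^ 2 := by nlinarith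
  have hc : c ≤ 1 := by linarith
  have hkey : c * x₁ * x₂ * (1 - z ^ 2) ≥ x₁ * x₂ * (1 - z ^ 2) := by nlinarith [mul_nonneg (mul_nonneg (by linarith : (0:ℝ) ≤ 1 - c) (by linarith : (0:ℝ) ≤ -(x₁ * x₂))) hz.le]
  have hmain : 0 < 1 + (x₁ + x₂) * z + x₁ * x₂ := by nlinarith [mul_pos (mul_pos (by linarith : (0:ℝ) < 1 + x₁) (by linarith : (0:ℝ) < 1 + x₂)) (by linarith : (0:ℝ) < 1 + z), mul_pos (mul_pos (by linarith : (0:ℝ) < 1 - x₁) (by linarith : (0:ℝ) < 1 - x₂)) (by linarith : (0:ℝ) < 1 - z)]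
  have hinner : 0 < (1 + x₁ * z) * (1 + x₂ * z) + c * x₁ * x₂ * (1 - z ^ 2) := by nlinarith
  positivity
end

section
/- Let s₁, s₂ ∈ ℝ with s₁ ≤ 0 < s₂. Then there exist x₁ ∈ (0,1) and x₂ ∈ (−1,0) such that x₁(s₁(x₁−x₂) − 2 + x₁x₂) − 3x₂ = 0 and x₂(s₂(x₂−x₁) − 2 + x₁x₂) − 3x₁ = 0. -/
/-!
(E1) is linear in `x₂`: it reads `x₂ · (x₁² - s₁x₁ - 3) = x₁ · (2 - s₁x₁)`, so it determines
`x₂ = x₁ · m(x₁)` with `m(x) = (2 - s₁x) / (x² - s₁x - 3)`. The curve `x ↦ x · m(x)` leaves the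
strip `x₂ > -1` exactly at the positive root `b ≤ 1` of `(1 - s₁)x² + (2 - s₁)x - 3`. Along this
curve the left side of (E2) equals `x · P(x)` with `P` continuous on `[0, b]`, `P(0) = -5/3`, and
`b · P(b) = s₂(1 + b) + 2(1 - b) > 0`, so `P` vanishes somewhere in `(0, b)`.
-/

open Set

namespace ScalarFlat

variable {s₁ x : ℝ}

noncomputable def e1Ratio (s₁ x : ℝ) : ℝ := (2 - s₁ * x) / (x ^ 2 - s₁ * x - 3)

def boundaryPoly (s₁ x : ℝ) : ℝ := (1 - s₁) * x ^ 2 + (2 - s₁) * x - 3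

lemma e1_mul_e1Ratio_eq_zero (hD : x ^ 2 - s₁ * x - 3 ≠ 0) :
    x * (s₁ * (x - x * e1Ratio s₁ x) - 2 + x * (x * e1Ratio s₁ x)) - 3 * (x * e1Ratio s₁ x)
      = 0 := by
  unfold e1Ratio
  linear_combination x * div_mul_cancel₀ (2 - s₁ * x) hD

lemma mul_e1Ratio_add_one (hD : x ^ 2 - s₁ * x - 3 ≠ 0) :
    x * e1Ratio s₁ x + 1 = boundaryPoly s₁ x / (x ^ 2 - s₁ * x - 3) := by
  rw [e1Ratio, boundaryPoly, mul_div_assoc', div_add_one hD]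
  ring

lemma strictMonoOn_boundaryPoly (h₁ : s₁ ≤ 0) : StrictMonoOn (boundaryPoly s₁) (Ici 0) := by
  intro x hx y hy hxy
  simp only [boundaryPoly]
  nlinarith [mul_pos (sub_pos.2 hxy) (by nlinarith [mem_Ici.1 hx, mem_Ici.1 hy] :
    0 < (1 - s₁) * (x + y) + (2 - s₁))]

lemma exists_boundaryPoly_eq_zero (h₁ : s₁ ≤ 0) : ∃ b ∈ Ioc (0 : ℝ) 1, boundaryPoly s₁ b = 0 := by
  have hsign : (0 : ℝ) ∈ Ioc (boundaryPoly s₁ 0) (boundaryPoly s₁ 1) := by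
    simp only [boundaryPoly, mem_Ioc]
    constructor <;> linarith
  exact intermediate_value_Ioc zero_le_one (by unfold boundaryPoly; fun_prop) hsign

variable {b : ℝ}

lemma boundaryPoly_neg_of_mem_Ico (h₁ : s₁ ≤ 0) (hb : boundaryPoly s₁ b = 0) (hx : x ∈ Ico 0 b) :
    boundaryPoly s₁ x < 0 :=
  hb ▸ strictMonoOn_boundaryPoly h₁ hx.1 (hx.1.trans hx.2.le) hx.2

/-- Writing the denominator as `boundaryPoly s₁ x - x (2 - s₁ x)` shows it is negative. -/
lemma denom_neg_of_mem_Icc (h₁ : s₁ ≤ 0) (hb : boundaryPoly s₁ b = 0) (hx : x ∈ Icc 0 b) :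
    x ^ 2 - s₁ * x - 3 < 0 := by
  obtain ⟨hx0, hxb⟩ := hx
  have hQ : boundaryPoly s₁ x ≤ 0 :=
    hb ▸ (strictMonoOn_boundaryPoly h₁).monotoneOn hx0 (hx0.trans hxb) hxb
  rcases hx0.eq_or_lt with rfl | hx0
  · norm_num
  · unfold boundaryPoly at hQ
    nlinarith [mul_pos hx0 (by nlinarith : 0 < 2 - s₁ * x)]

lemma exists_e2_eq_zero {s₂ : ℝ} (h₁ : s₁ ≤ 0) (h₂ : 0 < s₂) (hb : b ∈ Ioc 0 1)
    (hQb : boundaryPoly s₁ b = 0) :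
    ∃ c ∈ Ioo 0 b, c * e1Ratio s₁ c * (s₂ * (c * e1Ratio s₁ c - c) - 2 + c * (c * e1Ratio s₁ c))
      - 3 * c = 0 := by
  set P : ℝ → ℝ := fun x ↦
    e1Ratio s₁ x * (s₂ * (x * e1Ratio s₁ x - x) - 2 + x * (x * e1Ratio s₁ x)) - 3 with hP
  have hD : ∀ x ∈ Icc 0 b, x ^ 2 - s₁ * x - 3 ≠ 0 := fun x hx ↦
    (denom_neg_of_mem_Icc h₁ hQb hx).ne
  have hcont : ContinuousOn P (Icc 0 b) := by
    simp only [hP, e1Ratio]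
    fun_prop (disch := exact hD)
  have hP0 : P 0 < 0 := by norm_num [hP, e1Ratio]
  have hbr : b * e1Ratio s₁ b = -1 := by
    have h := mul_e1Ratio_add_one (hD b (right_mem_Icc.2 hb.1.le))
    rw [hQb, zero_div] at h
    linarith
  have hPb : 0 < P b := by
    refine pos_of_mul_pos_right ?_ hb.1.le
    have hbP : b * P b = s₂ * (1 + b) + 2 * (1 - b) := by
      simp only [hP]
      linear_combination ((s₂ + b) * (b * e1Ratio s₁ b - 1) - s₂ * b - 2) * hbr
    nlinarith [hb.2, mul_pos h₂ hb.1]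
  obtain ⟨c, hc, hPc⟩ := intermediate_value_Ioo hb.1.le hcont ⟨hP0, hPb⟩
  exact ⟨c, hc, by linear_combination c * hPc⟩

end ScalarFlat

open ScalarFlat in
/-- for `s₁ ≤ 0 < s₂` there is a solution `(x₁, x₂) ∈ (0,1) × (-1,0)`
of the scalar-flat (`s = 0`) equations. -/
theorem stmt17 (s₁ s₂ : ℝ) (h₁ : s₁ ≤ 0) (h₂ : 0 < s₂) :
    ∃ x₁ ∈ Set.Ioo (0:ℝ) 1, ∃ x₂ ∈ Set.Ioo (-1:ℝ) 0,
      x₁ * (s₁ * (x₁ - x₂) - 2 + x₁ * x₂) - 3 * x₂ = 0 ∧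
      x₂ * (s₂ * (x₂ - x₁) - 2 + x₁ * x₂) - 3 * x₁ = 0 := by
  obtain ⟨b, hb, hQb⟩ := exists_boundaryPoly_eq_zero h₁
  obtain ⟨c, hc, hE2⟩ := exists_e2_eq_zero h₁ h₂ hb hQb
  have hD := denom_neg_of_mem_Icc h₁ hQb (Ioo_subset_Icc_self hc)
  have hQc := boundaryPoly_neg_of_mem_Ico h₁ hQb (Ioo_subset_Ico_self hc)
  refine ⟨c, ⟨hc.1, hc.2.trans_le hb.2⟩, c * e1Ratio s₁ c, ⟨?_, ?_⟩,
    e1_mul_e1Ratio_eq_zero hD.ne, hE2⟩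
  · linarith [mul_e1Ratio_add_one hD.ne, div_pos_of_neg_of_neg hQc hD]
  · exact mul_neg_of_pos_of_neg hc.1 (div_neg_of_pos_of_neg (by nlinarith [hc.1]) hD)
end
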